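/- arXiv:2605.02420 — 8 statements merged into one kernel-verified Lean document; each statement's English description precedes it below -/
import Mathlib

section
/- Under the stated tail assumption on ν, the function H is nondecreasing on [0,1], there is a constant C > 0 with H(x) ≤ C x^{1+β} for all x ∈ (0,1], and lim_{x→0+} H(x)/x^{1+β} = (c_ν/β)·Γ(1−β), where Γ is the Gamma function. Equivalently, H(x) = K x^{1+β} W(x) with K = (c_ν/β)Γ(1−β) and W : (0,1] → [0,∞) bounded with lim_{x→0+} W(x) = 1. -/
set_option autoImplicit false

open MeasureTheory Filter Set Real Topology

/-!
With `φ(t) = e^{-t} - 1 + t` we have `H(x) = ∫ φ(zx) ν(dz)`, and since `φ(y) = ∫₀^y (1 - e^{-s}) ds`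
the layer-cake formula gives `H(x) = ∫₀^∞ ν((t/x, ∞)) (1 - e^{-t}) dt`. Hence
`H(x) / x^{1+β} = ∫₀^∞ [(t/x)^{1+β} ν((t/x, ∞))] (1 - e^{-t}) t^{-1-β} dt`: the bracket is
bounded and tends to `c_ν` as `x → 0+`, while `(1 - e^{-t}) t^{-1-β}` is integrable because
`0 < β < 1`. Dominated convergence gives the limit `c_ν ∫₀^∞ (1 - e^{-t}) t^{-1-β} dt`, which
equals `c_ν Γ(1-β)/β` after one integration by parts, and the same domination gives the bound.
Monotonicity of `H` comes from that of `φ` on `[0, ∞)`.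
-/

lemma one_sub_exp_neg_nonneg {t : ℝ} (ht : 0 ≤ t) : 0 ≤ 1 - exp (-t) := by
  linarith [exp_le_one_iff.mpr (neg_nonpos.mpr ht)]

lemma one_sub_exp_neg_le_min (t : ℝ) : 1 - exp (-t) ≤ min 1 t :=
  le_min (by linarith [exp_pos (-t)]) (by linarith [add_one_le_exp (-t)])

lemma exp_neg_sub_one_add_nonneg (t : ℝ) : 0 ≤ exp (-t) - 1 + t := by
  linarith [add_one_le_exp (-t)]

lemma monotoneOn_exp_neg_sub_one_add : MonotoneOn (fun t => exp (-t) - 1 + t) (Ici 0) := by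
  intro a ha b _ hab
  have hsplit : exp (-b) = exp (-a) * exp (a - b) := by rw [← exp_add]; ring_nf
  have hlin : exp (-a) * (a - b + 1) ≤ exp (-a) * exp (a - b) :=
    mul_le_mul_of_nonneg_left (add_one_le_exp _) (exp_pos _).le
  have hexp : exp (-a) ≤ 1 := exp_le_one_iff.mpr (neg_nonpos.mpr ha)
  dsimp only
  nlinarith

lemma intervalIntegral_one_sub_exp_neg (y : ℝ) :
    ∫ s in (0 : ℝ)..y, (1 - exp (-s)) = exp (-y) - 1 + y := by
  have hderiv : ∀ s ∈ uIcc (0 : ℝ) y, HasDerivAt (fun s => s + exp (-s)) (1 - exp (-s)) s := by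
    intro s _
    refine ((hasDerivAt_id' s).add (hasDerivAt_neg s).exp).congr_deriv ?_
    ring
  rw [intervalIntegral.integral_eq_sub_of_hasDerivAt hderiv
    ((by fun_prop : Continuous fun s => 1 - exp (-s)).intervalIntegrable _ _)]
  simp only [neg_zero, exp_zero]
  ring

lemma integrableOn_min_one_mul_rpow_neg {p : ℝ} (hp1 : 1 < p) (hp2 : p < 2) :
    IntegrableOn (fun t : ℝ => min 1 t * t ^ (-p)) (Ioi 0) := by
  rw [← Ioc_union_Ioi_eq_Ioi zero_le_one, integrableOn_union]
  constructor
  · have hint : IntegrableOn (fun t : ℝ => t ^ (1 - p)) (Ioc 0 1) := by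
      rw [← intervalIntegrable_iff_integrableOn_Ioc_of_le zero_le_one]
      exact intervalIntegral.intervalIntegrable_rpow' (by linarith)
    refine hint.congr_fun (fun t ht => ?_) measurableSet_Ioc
    dsimp only
    rw [min_eq_right ht.2, sub_eq_add_neg, rpow_add ht.1, rpow_one]
  · refine (integrableOn_Ioi_rpow_of_lt (a := -p) (by linarith) one_pos).congr_fun (fun t ht => ?_)
      measurableSet_Ioi
    rw [min_eq_left (le_of_lt ht), one_mul]

lemma integrableOn_one_sub_exp_neg_mul_rpow_neg {p : ℝ} (hp1 : 1 < p) (hp2 : p < 2) :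
    IntegrableOn (fun t : ℝ => (1 - exp (-t)) * t ^ (-p)) (Ioi 0) := by
  refine (integrableOn_min_one_mul_rpow_neg hp1 hp2).mono' ?_ ?_
  · exact (ContinuousOn.mul (by fun_prop) (continuousOn_id.rpow_const fun t ht =>
      Or.inl (ne_of_gt ht))).aestronglyMeasurable measurableSet_Ioi
  · refine (ae_restrict_iff' measurableSet_Ioi).mpr (Eventually.of_forall fun t ht => ?_)
    have hr : 0 ≤ t ^ (-p) := rpow_nonneg (le_of_lt ht) _
    rw [norm_mul, Real.norm_of_nonneg (one_sub_exp_neg_nonneg (le_of_lt ht)),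
      Real.norm_of_nonneg hr]
    exact mul_le_mul_of_nonneg_right (one_sub_exp_neg_le_min t) hr

lemma integral_one_sub_exp_neg_mul_rpow_neg {β : ℝ} (hβ0 : 0 < β) (hβ1 : β < 1) :
    ∫ t in Ioi 0, (1 - exp (-t)) * t ^ (-(1 + β)) = Gamma (1 - β) / β := by
  have hu : ∀ t ∈ Ioi (0 : ℝ), HasDerivAt (fun t => 1 - exp (-t)) (exp (-t)) t := fun t _ => by
    simpa using ((hasDerivAt_neg t).exp).const_sub 1
  have hv : ∀ t ∈ Ioi (0 : ℝ), HasDerivAt (fun t => -t ^ (-β) / β) (t ^ (-(1 + β))) t := by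
    intro t ht
    refine (((hasDerivAt_rpow_const (p := -β) (Or.inl (ne_of_gt ht))).neg).div_const β
      ).congr_deriv ?_
    rw [show -β - 1 = -(1 + β) by ring]
    field_simp
  have hΓ : IntegrableOn (fun t => exp (-t) * t ^ (-β)) (Ioi 0) := by
    simpa [show 1 - β - 1 = -β by ring] using GammaIntegral_convergent (s := 1 - β) (by linarith)
  have huv_zero : Tendsto (fun t => (1 - exp (-t)) * (-t ^ (-β) / β)) (𝓝[>] 0) (𝓝 0) := by
    have hbound : Tendsto (fun t : ℝ => t ^ (1 - β) / β) (𝓝[>] 0) (𝓝 0) := by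
      have h := (continuousAt_rpow_const 0 (1 - β) (Or.inr (by linarith))).tendsto.div_const β
      rw [zero_rpow (by linarith), zero_div] at h
      exact h.mono_left nhdsWithin_le_nhds
    refine squeeze_zero_norm' ?_ hbound
    filter_upwards [self_mem_nhdsWithin] with t (ht : 0 < t)
    have hr : 0 ≤ t ^ (-β) := rpow_nonneg ht.le _
    rw [norm_mul, norm_div, norm_neg, Real.norm_of_nonneg (one_sub_exp_neg_nonneg ht.le),
      Real.norm_of_nonneg hr, Real.norm_of_nonneg hβ0.le,
      show t ^ (1 - β) = t * t ^ (-β) by rw [sub_eq_add_neg, rpow_add ht, rpow_one], mul_div_assoc]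
    exact mul_le_mul_of_nonneg_right ((one_sub_exp_neg_le_min t).trans (min_le_right _ _))
      (by positivity)
  have huv_infty : Tendsto (fun t => (1 - exp (-t)) * (-t ^ (-β) / β)) atTop (𝓝 0) := by
    have h1 : Tendsto (fun t : ℝ => 1 - exp (-t)) atTop (𝓝 1) := by
      simpa using tendsto_exp_neg_atTop_nhds_zero.const_sub 1
    simpa using h1.mul ((tendsto_rpow_neg_atTop hβ0).neg.div_const β)
  rw [integral_Ioi_mul_deriv_eq_deriv_mul hu hv
    (integrableOn_one_sub_exp_neg_mul_rpow_neg (by linarith) (by linarith))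
    (IntegrableOn.congr_fun (hΓ.div_const (-β)) (fun t _ => by simp only [Pi.mul_apply]; ring)
      measurableSet_Ioi)
    huv_zero huv_infty, Gamma_eq_integral (by linarith), show 1 - β - 1 = -β by ring,
    ← integral_div, sub_zero, zero_sub, ← integral_neg]
  exact integral_congr_ae (Eventually.of_forall fun t => by simp only; ring)

section LaplaceTransform

variable {ν : Measure ℝ}

lemma measurable_measure_Ioi : Measurable fun y => ν (Ioi y) :=
  Antitone.measurable fun _ _ hab => measure_mono (Ioi_subset_Ioi hab)

lemma integrable_exp_neg_mul [IsFiniteMeasure ν] (hν : ∀ᵐ z ∂ν, 0 ≤ z) {x : ℝ} (hx : 0 ≤ x) :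
    Integrable (fun z => exp (-(z * x))) ν := by
  refine (integrable_const 1).mono' (by fun_prop) ?_
  filter_upwards [hν] with z hz
  rw [Real.norm_of_nonneg (exp_pos _).le]
  exact exp_le_one_iff.mpr (neg_nonpos.mpr (mul_nonneg hz hx))

lemma integrable_exp_neg_mul_sub_one_add [IsFiniteMeasure ν] (hν : ∀ᵐ z ∂ν, 0 ≤ z)
    (hint : Integrable (fun z => z) ν) {x : ℝ} (hx : 0 ≤ x) :
    Integrable (fun z => exp (-(z * x)) - 1 + z * x) ν :=
  ((integrable_exp_neg_mul hν hx).sub (integrable_const 1)).add (hint.mul_const x)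

lemma integral_exp_neg_mul_sub_one_add [IsProbabilityMeasure ν] (hν : ∀ᵐ z ∂ν, 0 ≤ z)
    (hint : Integrable (fun z => z) ν) (hmean : ∫ z, z ∂ν = 1) {x : ℝ} (hx : 0 ≤ x) :
    ∫ z, (exp (-(z * x)) - 1 + z * x) ∂ν = ∫ z, exp (-z * x) ∂ν - 1 + x := by
  have hexp := integrable_exp_neg_mul hν hx
  have hexp_sub : Integrable (fun z => exp (-(z * x)) - 1) ν := hexp.sub (integrable_const 1)
  rw [integral_add hexp_sub (hint.mul_const x),
    integral_sub hexp (integrable_const 1), integral_mul_const, hmean]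
  simp [neg_mul]

lemma integral_exp_neg_mul_sub_one_add_nonneg (x : ℝ) :
    0 ≤ ∫ z, (exp (-(z * x)) - 1 + z * x) ∂ν :=
  integral_nonneg fun z => exp_neg_sub_one_add_nonneg (z * x)

lemma monotoneOn_integral_exp_neg_mul_sub_one_add [IsFiniteMeasure ν] (hν : ∀ᵐ z ∂ν, 0 ≤ z)
    (hint : Integrable (fun z => z) ν) :
    MonotoneOn (fun x => ∫ z, (exp (-(z * x)) - 1 + z * x) ∂ν) (Ici 0) := by
  intro u hu v hv huv
  refine integral_mono_ae (integrable_exp_neg_mul_sub_one_add hν hint hu)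
    (integrable_exp_neg_mul_sub_one_add hν hint hv) ?_
  filter_upwards [hν] with z hz
  exact monotoneOn_exp_neg_sub_one_add (mul_nonneg hz hu) (mul_nonneg hz (le_trans hu huv))
    (mul_le_mul_of_nonneg_left huv hz)

lemma integral_exp_neg_mul_sub_one_add_eq_integral_tail [IsFiniteMeasure ν]
    (hν : ∀ᵐ z ∂ν, 0 ≤ z) {x : ℝ} (hx : 0 < x) :
    ∫ z, (exp (-(z * x)) - 1 + z * x) ∂ν
      = ∫ t in Ioi 0, (ν (Ioi (t / x))).toReal * (1 - exp (-t)) := by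
  have hmeas : Measurable fun t : ℝ => ν (Ioi (t / x)) * ENNReal.ofReal (1 - exp (-t)) :=
    (measurable_measure_Ioi.comp (measurable_id.div_const x)).mul (by fun_prop)
  have htail : ∀ t, {z : ℝ | t < z * x} = Ioi (t / x) := fun t => by
    ext z; exact (div_lt_iff₀ hx).symm
  have hlayer := lintegral_comp_eq_lintegral_meas_lt_mul ν
    (by filter_upwards [hν] with z hz using mul_nonneg hz hx.le) (by fun_prop)
    (fun t _ => (by fun_prop : Continuous fun s => 1 - exp (-s)).intervalIntegrable _ _)
    ((ae_restrict_iff' measurableSet_Ioi).mpr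
      (ae_of_all _ fun t ht => one_sub_exp_neg_nonneg (le_of_lt ht)))
  simp_rw [intervalIntegral_one_sub_exp_neg, htail] at hlayer
  rw [integral_eq_lintegral_of_nonneg_ae
      (ae_of_all _ fun z => exp_neg_sub_one_add_nonneg (z * x)) (by fun_prop), hlayer,
    ← integral_toReal hmeas.aemeasurable
      (ae_of_all _ fun t => ENNReal.mul_lt_top (measure_lt_top ν _) ENNReal.ofReal_lt_top)]
  refine setIntegral_congr_fun measurableSet_Ioi fun t ht => ?_
  rw [ENNReal.toReal_mul, ENNReal.toReal_ofReal (one_sub_exp_neg_nonneg (le_of_lt ht))]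

end LaplaceTransform

section RegularlyVaryingTail

variable {ψ g : ℝ → ℝ} {p c D : ℝ}

lemma exists_forall_rpow_mul_le_of_tendsto (hp : 0 ≤ p) (hψ : ∀ y, ψ y ≤ 1)
    (hlim : Tendsto (fun y => y ^ p * ψ y) atTop (𝓝 c)) :
    ∃ D > 0, ∀ y > 0, y ^ p * ψ y ≤ D := by
  obtain ⟨A, hA⟩ := eventually_atTop.mp (hlim.eventually (eventually_le_nhds (lt_add_one c)))
  refine ⟨max (max (c + 1) (max A 0 ^ p)) 1, by positivity, fun y hy => ?_⟩
  rcases le_total A y with hAy | hyA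
  · exact (hA y hAy).trans (le_max_of_le_left (le_max_left _ _))
  · calc y ^ p * ψ y ≤ y ^ p := mul_le_of_le_one_right (rpow_nonneg hy.le _) (hψ y)
      _ ≤ max A 0 ^ p := rpow_le_rpow hy.le (hyA.trans (le_max_left _ _)) hp
      _ ≤ _ := le_max_of_le_left (le_max_right _ _)

lemma comp_div_mul_div_rpow_eq {x t : ℝ} (hx : 0 < x) (ht : 0 < t) :
    ψ (t / x) * g t / x ^ p = (t / x) ^ p * ψ (t / x) * (g t * t ^ (-p)) := by
  have htp : t ^ p ≠ 0 := (rpow_pos_of_pos ht p).ne'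
  have hxp : x ^ p ≠ 0 := (rpow_pos_of_pos hx p).ne'
  rw [div_rpow ht.le hx.le, rpow_neg ht.le]
  field_simp

lemma integral_comp_div_div_rpow_le (hψ : ∀ y, 0 ≤ ψ y) (hD : ∀ y > 0, y ^ p * ψ y ≤ D)
    (hg : ∀ t > 0, 0 ≤ g t) (hgi : IntegrableOn (fun t => g t * t ^ (-p)) (Ioi 0))
    {x : ℝ} (hx : 0 < x) :
    (∫ t in Ioi 0, ψ (t / x) * g t) / x ^ p ≤ D * ∫ t in Ioi 0, g t * t ^ (-p) := by
  rw [← integral_div, ← integral_const_mul]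
  refine integral_mono_of_nonneg ?_ (hgi.const_mul D) ?_ <;>
    refine (ae_restrict_iff' measurableSet_Ioi).mpr (ae_of_all _ fun t (ht : 0 < t) => ?_)
  · exact div_nonneg (mul_nonneg (hψ _) (hg t ht)) (rpow_nonneg hx.le _)
  · dsimp only
    rw [comp_div_mul_div_rpow_eq hx ht]
    exact mul_le_mul_of_nonneg_right (hD _ (div_pos ht hx))
      (mul_nonneg (hg t ht) (rpow_nonneg ht.le _))

lemma tendsto_integral_comp_div_div_rpow (hψm : Measurable ψ) (hψ : ∀ y, 0 ≤ ψ y)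
    (hD : ∀ y > 0, y ^ p * ψ y ≤ D) (hlim : Tendsto (fun y => y ^ p * ψ y) atTop (𝓝 c))
    (hgm : Measurable g) (hg : ∀ t > 0, 0 ≤ g t)
    (hgi : IntegrableOn (fun t => g t * t ^ (-p)) (Ioi 0)) :
    Tendsto (fun x => (∫ t in Ioi 0, ψ (t / x) * g t) / x ^ p) (𝓝[>] 0)
      (𝓝 (c * ∫ t in Ioi 0, g t * t ^ (-p))) := by
  simp_rw [← integral_div, ← integral_const_mul]
  refine tendsto_integral_filter_of_dominated_convergence (fun t => D * (g t * t ^ (-p)))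
    (Eventually.of_forall fun x =>
      ((hψm.comp (measurable_id.div_const x)).mul hgm).div_const _ |>.aestronglyMeasurable)
    ?_ (hgi.const_mul D) ?_
  · filter_upwards [self_mem_nhdsWithin] with x (hx : 0 < x)
    refine (ae_restrict_iff' measurableSet_Ioi).mpr (ae_of_all _ fun t (ht : 0 < t) => ?_)
    rw [comp_div_mul_div_rpow_eq hx ht, Real.norm_of_nonneg
      (mul_nonneg (mul_nonneg (rpow_nonneg (div_pos ht hx).le _) (hψ _))
        (mul_nonneg (hg t ht) (rpow_nonneg ht.le _)))]
    exact mul_le_mul_of_nonneg_right (hD _ (div_pos ht hx))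
      (mul_nonneg (hg t ht) (rpow_nonneg ht.le _))
  · refine (ae_restrict_iff' measurableSet_Ioi).mpr (ae_of_all _ fun t (ht : 0 < t) => ?_)
    have hdiv : Tendsto (fun x => t / x) (𝓝[>] 0) atTop := by
      simpa only [div_eq_mul_inv] using tendsto_inv_nhdsGT_zero.const_mul_atTop ht
    refine ((hlim.comp hdiv).mul_const (g t * t ^ (-p))).congr' ?_
    filter_upwards [self_mem_nhdsWithin] with x (hx : 0 < x)
    exact (comp_div_mul_div_rpow_eq hx ht).symm

end RegularlyVaryingTail

lemma exists_eq_mul_rpow_mul_of_tendsto {H : ℝ → ℝ} {K C q : ℝ} (hK : 0 < K)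
    (hH : ∀ x ∈ Ioc (0 : ℝ) 1, 0 ≤ H x) (hC : ∀ x ∈ Ioc (0 : ℝ) 1, H x ≤ C * x ^ q)
    (hlim : Tendsto (fun x => H x / x ^ q) (𝓝[>] 0) (𝓝 K)) :
    ∃ W : ℝ → ℝ, (∀ x ∈ Ioc (0 : ℝ) 1, 0 ≤ W x) ∧ (∃ M, ∀ x ∈ Ioc (0 : ℝ) 1, W x ≤ M) ∧
      Tendsto W (𝓝[>] 0) (𝓝 1) ∧ ∀ x ∈ Ioc (0 : ℝ) 1, H x = K * x ^ q * W x := by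
  refine ⟨fun x => H x / x ^ q / K, fun x hx => ?_, ⟨C / K, fun x hx => ?_⟩, ?_, fun x hx => ?_⟩
  · exact div_nonneg (div_nonneg (hH x hx) (rpow_nonneg hx.1.le q)) hK.le
  · exact div_le_div_of_nonneg_right ((div_le_iff₀ (rpow_pos_of_pos hx.1 q)).mpr (hC x hx)) hK.le
  · simpa only [div_self hK.ne'] using hlim.div_const K
  · have hxq : x ^ q ≠ 0 := (rpow_pos_of_pos hx.1 q).ne'
    field_simp

/-- Under the tail assumption on ν, the function
`H(u) = G(1-u) - 1 + u` (with `G` the Laplace transform of ν) is nondecreasing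
on `[0,1]`, satisfies `H(x) ≤ C x^{1+β}` on `(0,1]`, and
`H(x)/x^{1+β} → (c_ν/β)Γ(1-β)` as `x → 0+`; equivalently
`H(x) = K x^{1+β} W(x)` with `K = (c_ν/β)Γ(1-β)` and `W` bounded,
nonnegative, with `W(x) → 1` as `x → 0+`. -/
theorem stmt0
    (ν : Measure ℝ) [IsProbabilityMeasure ν]
    (hν_supp : ν (Iio 0) = 0)
    (hν_mean : ∫ x, x ∂ν = 1)
    (β cν : ℝ) (hβ : β ∈ Ioo (0 : ℝ) 1) (hcν : 0 < cν)
    (hν_tail : Tendsto (fun x : ℝ => x ^ (1 + β) * (ν (Ioi x)).toReal)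
      atTop (nhds cν))
    (G H : ℝ → ℝ)
    (hG : ∀ s, G s = ∫ z, Real.exp (-z * (1 - s)) ∂ν)
    (hH : ∀ u, H u = G (1 - u) - 1 + u) :
    MonotoneOn H (Icc 0 1) ∧
    (∃ C > 0, ∀ x ∈ Ioc (0 : ℝ) 1, H x ≤ C * x ^ (1 + β)) ∧
    Tendsto (fun x : ℝ => H x / x ^ (1 + β)) (nhdsWithin 0 (Ioi 0))
      (nhds (cν / β * Real.Gamma (1 - β))) ∧
    (∃ W : ℝ → ℝ, (∀ x ∈ Ioc (0 : ℝ) 1, 0 ≤ W x) ∧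
      (∃ M, ∀ x ∈ Ioc (0 : ℝ) 1, W x ≤ M) ∧
      Tendsto W (nhdsWithin 0 (Ioi 0)) (nhds 1) ∧
      (∀ x ∈ Ioc (0 : ℝ) 1,
        H x = (cν / β * Real.Gamma (1 - β)) * x ^ (1 + β) * W x)) := by
  obtain ⟨hβ0, hβ1⟩ := hβ
  have hΓ : 0 < Gamma (1 - β) := Gamma_pos_of_pos (by linarith)
  have hν : ∀ᵐ z ∂ν, 0 ≤ z :=
    ae_iff.mpr (by rwa [show {z : ℝ | ¬0 ≤ z} = Iio 0 by ext; simp])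
  have hint : Integrable (fun z => z) ν := .of_integral_ne_zero (by rw [hν_mean]; exact one_ne_zero)
  have hH_eq : ∀ x ≥ 0, H x = ∫ z, (exp (-(z * x)) - 1 + z * x) ∂ν := fun x hx => by
    rw [integral_exp_neg_mul_sub_one_add hν hint hν_mean hx, hH, hG, sub_sub_cancel]
  have hH_tail : ∀ x > 0, H x / x ^ (1 + β)
      = (∫ t in Ioi 0, (ν (Ioi (t / x))).toReal * (1 - exp (-t))) / x ^ (1 + β) := fun x hx => by
    rw [hH_eq x hx.le, integral_exp_neg_mul_sub_one_add_eq_integral_tail hν hx]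
  have htail_le : ∀ y, (ν (Ioi y)).toReal ≤ 1 := fun y => by
    simpa using ENNReal.toReal_mono ENNReal.one_ne_top (prob_le_one (μ := ν) (s := Ioi y))
  obtain ⟨D, hD0, hD⟩ := exists_forall_rpow_mul_le_of_tendsto (by linarith) htail_le hν_tail
  have hgi := integrableOn_one_sub_exp_neg_mul_rpow_neg (p := 1 + β) (by linarith) (by linarith)
  have hg : ∀ t > (0 : ℝ), 0 ≤ 1 - exp (-t) := fun t ht => one_sub_exp_neg_nonneg ht.le
  have hlim : Tendsto (fun x => H x / x ^ (1 + β)) (𝓝[>] 0) (𝓝 (cν / β * Gamma (1 - β))) := by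
    have h := tendsto_integral_comp_div_div_rpow
      measurable_measure_Ioi.ennreal_toReal
      (fun _ => ENNReal.toReal_nonneg) hD hν_tail (by fun_prop) hg hgi
    rw [integral_one_sub_exp_neg_mul_rpow_neg hβ0 hβ1, ← mul_div_assoc, ← div_mul_eq_mul_div] at h
    exact h.congr' (eventually_nhdsWithin_of_forall fun x hx => (hH_tail x hx).symm)
  have hbound : ∀ x ∈ Ioc (0 : ℝ) 1, H x ≤ D * (Gamma (1 - β) / β) * x ^ (1 + β) := by
    intro x hx
    rw [← div_le_iff₀ (rpow_pos_of_pos hx.1 _), hH_tail x hx.1,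
      ← integral_one_sub_exp_neg_mul_rpow_neg hβ0 hβ1]
    exact integral_comp_div_div_rpow_le (fun _ => ENNReal.toReal_nonneg) hD hg hgi hx.1
  refine ⟨?_, ⟨_, by positivity, hbound⟩, hlim,
    exists_eq_mul_rpow_mul_of_tendsto (by positivity)
      (fun x hx => hH_eq x hx.1.le ▸ integral_exp_neg_mul_sub_one_add_nonneg x) hbound hlim⟩
  exact ((monotoneOn_integral_exp_neg_mul_sub_one_add hν hint).mono Icc_subset_Ici_self).congr
    fun x hx => (hH_eq x hx.1).symm
end

section
/- Let β ∈ (0,1) and suppose there exists δ > 0 such that ∫_0^∞ s^{β+δ} φ(s) ds < ∞. Then liminf_{T→∞} T^{−min(β+δ,1)} I_R(T) > 0. -/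
/-!
Put `α = min (β + δ) 1`. Since `α ≤ 1`, `x ↦ x ^ α` is subadditive on `[0, ∞)`, so the `α`-th moment
of `φ^{*k}` is at most `k` times that of `φ`, which is finite. By Markov's inequality `φ^{*k}` then
keeps mass at least `1/2` on `(0, T]` for all `k ≲ T ^ α`, and summing over these `k` gives
`I_R(T) ≳ T ^ α`.
-/

set_option autoImplicit false

open MeasureTheory Filter Set
open scoped ENNReal

/-- `convIter φ k` is the `(k+1)`-fold convolution `φ^{*(k+1)}` of `φ`. -/
noncomputable def convIter (φ : ℝ → ℝ) : ℕ → ℝ → ℝ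
  | 0 => φ
  | n + 1 => fun x => ∫ s, convIter φ n s * φ (x - s)

/-- `IR φ T = ∑_{k=1}^∞ ∫_0^T φ^{*k}(s) ds`, valued in `[0,∞]`. -/
noncomputable def IR (φ : ℝ → ℝ) (T : ℝ) : ENNReal :=
  ∑' k : ℕ, ∫⁻ s in Set.Ioc (0 : ℝ) T, ENNReal.ofReal (convIter φ k s)

theorem lintegral_lconvolution {G : Type*} [MeasurableSpace G] [AddGroup G] [MeasurableAdd₂ G]
    [MeasurableNeg G] {μ : Measure G} [SFinite μ] [μ.IsAddLeftInvariant]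
    {f g : G → ℝ≥0∞} (hf : Measurable f) (hg : Measurable g) :
    ∫⁻ x, (f ⋆ₗ[μ] g) x ∂μ = (∫⁻ x, f x ∂μ) * ∫⁻ x, g x ∂μ := by
  simp_rw [lconvolution_def]
  rw [lintegral_lintegral_swap (by fun_prop)]
  have hinner : ∀ y, ∫⁻ x, f y * g (-y + x) ∂μ = f y * ∫⁻ x, g x ∂μ := fun y => by
    rw [lintegral_const_mul _ (by fun_prop), lintegral_add_left_eq_self]
  simp_rw [hinner]
  exact lintegral_mul_const _ hf

theorem setLIntegral_Ioi_zero_eq_lintegral {f : ℝ → ℝ≥0∞} (hf : ∀ x < 0, f x = 0) :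
    ∫⁻ x in Ioi 0, f x = ∫⁻ x, f x := by
  rw [setLIntegral_congr Ioi_ae_eq_Ici]
  exact setLIntegral_eq_of_support_subset fun x hx => not_lt.1 fun hx0 => hx (hf x hx0)

theorem ENNReal.ofReal_add_rpow_le {α : ℝ} (hα0 : 0 ≤ α) (hα1 : α ≤ 1) (a b : ℝ) :
    ENNReal.ofReal (a + b) ^ α ≤ ENNReal.ofReal a ^ α + ENNReal.ofReal b ^ α :=
  (ENNReal.rpow_le_rpow ENNReal.ofReal_add_le hα0).trans (ENNReal.rpow_add_le_add_rpow _ _ hα0 hα1)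

noncomputable def rpowMoment (α : ℝ) (f : ℝ → ℝ≥0∞) : ℝ≥0∞ :=
  ∫⁻ x, ENNReal.ofReal x ^ α * f x

section rpowMoment

variable {α : ℝ} {f g : ℝ → ℝ≥0∞}

theorem rpowMoment_congr_ae (h : f =ᵐ[volume] g) : rpowMoment α f = rpowMoment α g :=
  lintegral_congr_ae (h.mono fun x hx => by simp only [hx])

theorem rpowMoment_le_lintegral_add {γ : ℝ} (hα : 0 ≤ α) (hαγ : α ≤ γ) (hf : Measurable f) :
    rpowMoment α f ≤ (∫⁻ x, f x) + rpowMoment γ f := by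
  refine (lintegral_mono fun x => ?_).trans_eq (lintegral_add_left hf _)
  rw [← one_add_mul]
  gcongr
  rcases le_total (ENNReal.ofReal x) 1 with hx | hx
  · exact le_add_right (ENNReal.rpow_le_one hx hα)
  · exact le_add_left (ENNReal.rpow_le_rpow_of_exponent_le hx hαγ)

theorem rpowMoment_lconvolution_le (hα0 : 0 ≤ α) (hα1 : α ≤ 1) (hf : Measurable f)
    (hg : Measurable g) :
    rpowMoment α (f ⋆ₗ g) ≤ rpowMoment α f * (∫⁻ x, g x) + (∫⁻ x, f x) * rpowMoment α g := by
  set F := fun x => ENNReal.ofReal x ^ α * f x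
  set H := fun x => ENNReal.ofReal x ^ α * g x
  have hF : Measurable F := by fun_prop
  have hH : Measurable H := by fun_prop
  have hpt : ∀ x, ENNReal.ofReal x ^ α * (f ⋆ₗ g) x ≤ (F ⋆ₗ g) x + (f ⋆ₗ H) x := fun x => by
    simp only [lconvolution_def, F, H]
    rw [← lintegral_add_left (by fun_prop), ← lintegral_const_mul _ (by fun_prop)]
    refine lintegral_mono fun y => ?_
    calc ENNReal.ofReal x ^ α * (f y * g (-y + x))
        ≤ (ENNReal.ofReal y ^ α + ENNReal.ofReal (-y + x) ^ α) * (f y * g (-y + x)) := by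
          gcongr
          simpa using ENNReal.ofReal_add_rpow_le hα0 hα1 y (-y + x)
      _ = _ := by ring
  calc rpowMoment α (f ⋆ₗ g) ≤ ∫⁻ x, (F ⋆ₗ g) x + (f ⋆ₗ H) x := lintegral_mono hpt
    _ = _ := by
      rw [lintegral_add_left (measurable_lconvolution _ hF hg), lintegral_lconvolution hF hg,
        lintegral_lconvolution hf hH]
      rfl

theorem ofReal_rpow_mul_setLIntegral_Ioi_le (hα : 0 ≤ α) (T : ℝ) :
    ENNReal.ofReal T ^ α * ∫⁻ x in Ioi T, f x ≤ rpowMoment α f :=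
  calc ENNReal.ofReal T ^ α * ∫⁻ x in Ioi T, f x
      ≤ ∫⁻ x in Ioi T, ENNReal.ofReal T ^ α * f x := lintegral_const_mul_le _ _
    _ ≤ ∫⁻ x in Ioi T, ENNReal.ofReal x ^ α * f x :=
      setLIntegral_mono' measurableSet_Ioi fun x hx => by
        gcongr
        exact le_of_lt hx
    _ ≤ rpowMoment α f := setLIntegral_le_lintegral _ _

end rpowMoment

theorem lintegral_ofReal_eq_one {φ : ℝ → ℝ} (hφ_nonneg : ∀ t, 0 ≤ φ t)
    (hφ_zero : ∀ t < 0, φ t = 0) (hφ_int : ∫ t in Ioi (0 : ℝ), φ t = 1) :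
    ∫⁻ x, ENNReal.ofReal (φ x) = 1 := by
  have hInt : IntegrableOn φ (Ioi 0) := Integrable.of_integral_ne_zero (by simp [hφ_int])
  rw [← setLIntegral_Ioi_zero_eq_lintegral fun x hx => by simp [hφ_zero x hx],
    ← ofReal_integral_eq_lintegral_ofReal hInt (ae_of_all _ hφ_nonneg), hφ_int, ENNReal.ofReal_one]

theorem rpowMoment_ofReal_eq_setLIntegral {φ : ℝ → ℝ} {γ : ℝ} (hγ : 0 < γ) :
    rpowMoment γ (ENNReal.ofReal ∘ φ) = ∫⁻ s in Ioi 0, ENNReal.ofReal (s ^ γ * φ s) := by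
  rw [rpowMoment, ← setLIntegral_Ioi_zero_eq_lintegral fun x hx => by
    simp [ENNReal.ofReal_of_nonpos hx.le, hγ]]
  refine setLIntegral_congr_fun measurableSet_Ioi fun x hx => ?_
  rw [ENNReal.ofReal_mul (Real.rpow_nonneg (le_of_lt hx) _), ENNReal.ofReal_rpow_of_pos hx]
  rfl

section convIter

variable {φ : ℝ → ℝ}

@[fun_prop]
theorem measurable_convIter (hφ : Measurable φ) : ∀ k, Measurable (convIter φ k)
  | 0 => hφ
  | k + 1 => by
    have hprod : StronglyMeasurable fun p : ℝ × ℝ => convIter φ k p.2 * φ (p.1 - p.2) :=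
      (((measurable_convIter hφ k).comp measurable_snd).mul
        (hφ.comp (measurable_fst.sub measurable_snd))).stronglyMeasurable
    exact hprod.integral_prod_right'.measurable

theorem convIter_nonneg (hφ : ∀ t, 0 ≤ φ t) : ∀ k x, 0 ≤ convIter φ k x
  | 0, x => hφ x
  | k + 1, _ => integral_nonneg fun _ => mul_nonneg (convIter_nonneg hφ k _) (hφ _)

theorem convIter_of_neg (hφ : ∀ t < 0, φ t = 0) : ∀ k, ∀ x < 0, convIter φ k x = 0
  | 0, x, hx => hφ x hx
  | k + 1, x, hx => by
    refine integral_eq_zero_of_ae (ae_of_all _ fun s => ?_)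
    rcases lt_or_ge s 0 with hs | hs
    · simp [convIter_of_neg hφ k s hs]
    · simp [hφ (x - s) (by linarith)]

theorem ofReal_convIter_succ_ae_eq (hφ_meas : Measurable φ) (hφ_nonneg : ∀ t, 0 ≤ φ t) {k : ℕ}
    (hfin : ∫⁻ x, ((ENNReal.ofReal ∘ convIter φ k) ⋆ₗ (ENNReal.ofReal ∘ φ)) x ≠ ∞) :
    ENNReal.ofReal ∘ convIter φ (k + 1) =ᵐ[volume]
      (ENNReal.ofReal ∘ convIter φ k) ⋆ₗ (ENNReal.ofReal ∘ φ) := by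
  filter_upwards [ae_lt_top (measurable_lconvolution _ (by fun_prop) (by fun_prop)) hfin]
    with x hx
  simp only [Function.comp_apply, convIter]
  rw [integral_eq_lintegral_of_nonneg_ae
    (ae_of_all _ fun s => mul_nonneg (convIter_nonneg hφ_nonneg k s) (hφ_nonneg _))
    (by fun_prop), ← ENNReal.ofReal_toReal hx.ne]
  congr 2
  refine lintegral_congr fun s => ?_
  rw [ENNReal.ofReal_mul (convIter_nonneg hφ_nonneg k s), neg_add_eq_sub]
  rfl

theorem lintegral_ofReal_convIter (hφ_meas : Measurable φ) (hφ_nonneg : ∀ t, 0 ≤ φ t)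
    (hφ_one : ∫⁻ x, ENNReal.ofReal (φ x) = 1) :
    ∀ k, ∫⁻ x, ENNReal.ofReal (convIter φ k x) = 1
  | 0 => hφ_one
  | k + 1 => by
    have hconv : ∫⁻ x, ((ENNReal.ofReal ∘ convIter φ k) ⋆ₗ (ENNReal.ofReal ∘ φ)) x = 1 := by
      rw [lintegral_lconvolution (by fun_prop) (by fun_prop)]
      simp only [Function.comp_apply, lintegral_ofReal_convIter hφ_meas hφ_nonneg hφ_one k,
        hφ_one, one_mul]
    rw [← hconv]
    exact lintegral_congr_ae
      (ofReal_convIter_succ_ae_eq hφ_meas hφ_nonneg (by rw [hconv]; exact ENNReal.one_ne_top))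

theorem rpowMoment_convIter_le {α : ℝ} (hα0 : 0 ≤ α) (hα1 : α ≤ 1) (hφ_meas : Measurable φ)
    (hφ_nonneg : ∀ t, 0 ≤ φ t) (hφ_one : ∫⁻ x, ENNReal.ofReal (φ x) = 1) :
    ∀ k : ℕ, rpowMoment α (ENNReal.ofReal ∘ convIter φ k)
      ≤ (k + 1) * rpowMoment α (ENNReal.ofReal ∘ φ)
  | 0 => by simp [convIter]
  | k + 1 => by
    have hmass := lintegral_ofReal_convIter hφ_meas hφ_nonneg hφ_one
    have hk := ENNReal.measurable_ofReal.comp (measurable_convIter hφ_meas k)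
    have hφ := ENNReal.measurable_ofReal.comp hφ_meas
    have hconv : ∫⁻ x, ((ENNReal.ofReal ∘ convIter φ k) ⋆ₗ (ENNReal.ofReal ∘ φ)) x ≠ ∞ := by
      rw [lintegral_lconvolution hk hφ]
      exact ENNReal.mul_ne_top (by simp [hmass k]) (by simp [hφ_one])
    calc rpowMoment α (ENNReal.ofReal ∘ convIter φ (k + 1))
        = rpowMoment α ((ENNReal.ofReal ∘ convIter φ k) ⋆ₗ (ENNReal.ofReal ∘ φ)) :=
          rpowMoment_congr_ae (ofReal_convIter_succ_ae_eq hφ_meas hφ_nonneg hconv)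
      _ ≤ rpowMoment α (ENNReal.ofReal ∘ convIter φ k) + rpowMoment α (ENNReal.ofReal ∘ φ) := by
          simpa [hmass k, hφ_one] using rpowMoment_lconvolution_le hα0 hα1 hk hφ
      _ ≤ (k + 1) * rpowMoment α (ENNReal.ofReal ∘ φ) + rpowMoment α (ENNReal.ofReal ∘ φ) := by
          gcongr
          exact rpowMoment_convIter_le hα0 hα1 hφ_meas hφ_nonneg hφ_one k
      _ = ((k + 1 : ℕ) + 1) * rpowMoment α (ENNReal.ofReal ∘ φ) := by
          push_cast
          ring

theorem inv_two_le_setLIntegral_Ioc_convIter {α : ℝ} (hα0 : 0 ≤ α) (hα1 : α ≤ 1)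
    (hφ_meas : Measurable φ) (hφ_nonneg : ∀ t, 0 ≤ φ t) (hφ_zero : ∀ t < 0, φ t = 0)
    (hφ_one : ∫⁻ x, ENNReal.ofReal (φ x) = 1) {T : ℝ} (hT : 0 < T) {k : ℕ}
    (hk : 2 * ((k + 1) * rpowMoment α (ENNReal.ofReal ∘ φ)) ≤ ENNReal.ofReal T ^ α) :
    2⁻¹ ≤ ∫⁻ x in Ioc 0 T, ENNReal.ofReal (convIter φ k x) := by
  have hTα0 : ENNReal.ofReal T ^ α ≠ 0 := by simp [hT]
  have hTα : ENNReal.ofReal T ^ α ≠ ∞ := by simp [hα0]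
  have htail : ∫⁻ x in Ioi T, ENNReal.ofReal (convIter φ k x) ≤ 2⁻¹ := by
    rw [← ENNReal.mul_le_mul_iff_right hTα0 hTα]
    calc ENNReal.ofReal T ^ α * ∫⁻ x in Ioi T, ENNReal.ofReal (convIter φ k x)
        ≤ (k + 1) * rpowMoment α (ENNReal.ofReal ∘ φ) :=
          (ofReal_rpow_mul_setLIntegral_Ioi_le hα0 T).trans
            (rpowMoment_convIter_le hα0 hα1 hφ_meas hφ_nonneg hφ_one k)
      _ ≤ ENNReal.ofReal T ^ α * 2⁻¹ := by
          rw [← div_eq_mul_inv, ENNReal.le_div_iff_mul_le (by simp) (by simp), mul_comm]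
          exact hk
  have hsplit : (∫⁻ x in Ioc 0 T, ENNReal.ofReal (convIter φ k x))
      + ∫⁻ x in Ioi T, ENNReal.ofReal (convIter φ k x) = 1 := by
    rw [← lintegral_union measurableSet_Ioi (Ioc_disjoint_Ioi le_rfl), Ioc_union_Ioi_eq_Ioi hT.le,
      setLIntegral_Ioi_zero_eq_lintegral fun x hx => by simp [convIter_of_neg hφ_zero k x hx],
      lintegral_ofReal_convIter hφ_meas hφ_nonneg hφ_one]
  rw [← ENNReal.one_sub_inv_two, tsub_le_iff_right, ← hsplit]
  gcongr

theorem ofReal_div_two_le_IR {α : ℝ} (hα0 : 0 ≤ α) (hα1 : α ≤ 1)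
    (hφ_meas : Measurable φ) (hφ_nonneg : ∀ t, 0 ≤ φ t) (hφ_zero : ∀ t < 0, φ t = 0)
    (hφ_one : ∫⁻ x, ENNReal.ofReal (φ x) = 1) {C T : ℝ}
    (hMC : rpowMoment α (ENNReal.ofReal ∘ φ) ≤ ENNReal.ofReal C) (hT : 0 < T) {N : ℕ}
    (hN : 2 * N * C ≤ T ^ α) :
    ENNReal.ofReal (N / 2) ≤ IR φ T := by
  have hterm : ∀ k < N, 2⁻¹ ≤ ∫⁻ x in Ioc 0 T, ENNReal.ofReal (convIter φ k x) := by
    intro k hk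
    refine inv_two_le_setLIntegral_Ioc_convIter hα0 hα1 hφ_meas hφ_nonneg hφ_zero hφ_one hT ?_
    calc 2 * ((k + 1) * rpowMoment α (ENNReal.ofReal ∘ φ)) ≤ 2 * (N * ENNReal.ofReal C) := by
          gcongr
          exact_mod_cast hk
      _ = ENNReal.ofReal (2 * N * C) := by
          rw [mul_assoc, ENNReal.ofReal_mul zero_le_two, ENNReal.ofReal_mul (Nat.cast_nonneg N)]
          simp
      _ ≤ ENNReal.ofReal T ^ α := by
          rw [ENNReal.ofReal_rpow_of_pos hT]
          exact ENNReal.ofReal_le_ofReal hN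
  calc ENNReal.ofReal (N / 2) = ∑ _k ∈ Finset.range N, 2⁻¹ := by
        rw [Finset.sum_const, Finset.card_range, nsmul_eq_mul, ENNReal.ofReal_div_of_pos two_pos,
          ENNReal.ofReal_natCast, ENNReal.ofReal_ofNat, div_eq_mul_inv]
    _ ≤ ∑ k ∈ Finset.range N, ∫⁻ x in Ioc 0 T, ENNReal.ofReal (convIter φ k x) :=
        Finset.sum_le_sum fun k hk => hterm k (Finset.mem_range.1 hk)
    _ ≤ IR φ T := ENNReal.sum_le_tsum _

theorem ofReal_inv_le_IR_div_rpow {α : ℝ} (hα0 : 0 < α) (hα1 : α ≤ 1)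
    (hφ_meas : Measurable φ) (hφ_nonneg : ∀ t, 0 ≤ φ t) (hφ_zero : ∀ t < 0, φ t = 0)
    (hφ_one : ∫⁻ x, ENNReal.ofReal (φ x) = 1) {C T : ℝ} (hC : 0 < C)
    (hMC : rpowMoment α (ENNReal.ofReal ∘ φ) ≤ ENNReal.ofReal C) (hT : (4 * C) ^ α⁻¹ ≤ T) :
    ENNReal.ofReal (1 / (8 * C)) ≤ IR φ T / ENNReal.ofReal (T ^ α) := by
  have hT0 : 0 < T := (Real.rpow_pos_of_pos (by positivity) _).trans_le hT
  have hTα : 4 * C ≤ T ^ α := (Real.rpow_inv_le_iff_of_pos (by positivity) hT0.le hα0).1 hT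
  set a := T ^ α / (2 * C) with ha_def
  have ha : 1 ≤ a := by rw [ha_def, le_div_iff₀ (by positivity)]; linarith
  have hTa : T ^ α = 2 * a * C := by rw [ha_def]; field_simp
  have hIR := ofReal_div_two_le_IR hα0.le hα1 hφ_meas hφ_nonneg hφ_zero hφ_one hMC hT0
    (N := ⌊a⌋₊) (by rw [hTa]; gcongr; exact Nat.floor_le (by linarith))
  rw [ENNReal.le_div_iff_mul_le (Or.inl (by simp [Real.rpow_pos_of_pos hT0]))
    (Or.inl ENNReal.ofReal_ne_top), ← ENNReal.ofReal_mul (by positivity)]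
  refine le_trans (ENNReal.ofReal_le_ofReal ?_) hIR
  have hfloor := Nat.div_two_lt_floor ha
  have h8 : 1 / (8 * C) * T ^ α = a / 4 := by rw [hTa]; field_simp; ring
  linarith

end convIter

/-- if `∫_0^∞ s^{β+δ} φ(s) ds < ∞` for some `δ > 0`, then
`liminf_{T→∞} T^{-min(β+δ,1)} I_R(T) > 0`. -/
theorem stmt4
    (φ : ℝ → ℝ) (hφ_meas : Measurable φ) (hφ_nonneg : ∀ t, 0 ≤ φ t)
    (hφ_zero : ∀ t < 0, φ t = 0)
    (hφ_int : ∫ t in Set.Ioi (0 : ℝ), φ t = 1)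
    (β δ : ℝ) (hβ : β ∈ Ioo (0 : ℝ) 1) (hδ : 0 < δ)
    (hmom : ∫⁻ s in Set.Ioi (0 : ℝ), ENNReal.ofReal (s ^ (β + δ) * φ s) < ⊤) :
    0 < Filter.liminf
      (fun T : ℝ => IR φ T / ENNReal.ofReal (T ^ min (β + δ) 1)) atTop := by
  obtain ⟨hβ0, -⟩ := hβ
  set α := min (β + δ) 1
  have hα0 : 0 < α := lt_min (by linarith) one_pos
  have hφ_one := lintegral_ofReal_eq_one hφ_nonneg hφ_zero hφ_int
  have hM : rpowMoment α (ENNReal.ofReal ∘ φ) ≠ ∞ := by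
    refine ne_top_of_le_ne_top ?_
      (rpowMoment_le_lintegral_add hα0.le (min_le_left _ _) (by fun_prop))
    rw [rpowMoment_ofReal_eq_setLIntegral (by linarith)]
    exact ENNReal.add_ne_top.2 ⟨by simp [hφ_one], hmom.ne⟩
  set C := (rpowMoment α (ENNReal.ofReal ∘ φ)).toReal + 1
  have hMC : rpowMoment α (ENNReal.ofReal ∘ φ) ≤ ENNReal.ofReal C := by
    rw [← ENNReal.ofReal_toReal hM]
    exact ENNReal.ofReal_le_ofReal (le_add_of_nonneg_right zero_le_one)
  have hC : 0 < C := by positivity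
  refine (ENNReal.ofReal_pos.2 (by positivity : (0 : ℝ) < 1 / (8 * C))).trans_le
    (le_liminf_of_le (by isBoundedDefault) ?_)
  filter_upwards [eventually_ge_atTop ((4 * C) ^ α⁻¹)] with T hT
  exact ofReal_inv_le_IR_div_rpow hα0 (min_le_right _ _) hφ_meas hφ_nonneg hφ_zero hφ_one hC hMC hT
end

section
/- Let f : [0,∞) → [0,∞) be Borel measurable and let g : [0,∞) → [0,1] be a Borel measurable nonincreasing function satisfying g(t) = 1 − e^{−f(t)} G(1 − ∫_0^∞ g(t+s) φ(s) ds) for all t ≥ 0. Then H(g(t)) ≤ 1 − e^{−f(t)} ≤ f(t) for all t ≥ 0. -/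
set_option autoImplicit false

open MeasureTheory Filter Set

/-- if `g : [0,∞) → [0,1]` is Borel, nonincreasing and solves
`g(t) = 1 - e^{-f(t)} G(1 - ∫_0^∞ g(t+s) φ(s) ds)` for `t ≥ 0`, where `G` is
the generating function of a mean-one distribution on ℕ and `φ` is a
probability density on `[0,∞)`, then `H(g(t)) ≤ 1 - e^{-f(t)} ≤ f(t)` for all
`t ≥ 0`, where `H(u) = G(1-u) - 1 + u`. -/
theorem stmt6
    (p : ℕ → ℝ) (hp_nonneg : ∀ k, 0 ≤ p k)
    (hp_sum : ∑' k, p k = 1)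
    (hp_mean : ∑' k : ℕ, (k : ℝ) * p k = 1)
    (G H : ℝ → ℝ)
    (hG : ∀ s, G s = ∑' k, p k * s ^ k)
    (hH : ∀ u, H u = G (1 - u) - 1 + u)
    (φ : ℝ → ℝ) (hφ_meas : Measurable φ) (hφ_nonneg : ∀ t, 0 ≤ φ t)
    (hφ_zero : ∀ t < 0, φ t = 0)
    (hφ_int : ∫ t in Set.Ioi (0 : ℝ), φ t = 1)
    (f g : ℝ → ℝ)
    (hf_meas : Measurable f) (hf_nonneg : ∀ t, 0 ≤ f t)
    (hg_meas : Measurable g) (hg_mem : ∀ t, g t ∈ Icc (0 : ℝ) 1)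
    (hg_anti : AntitoneOn g (Ici 0))
    (hg_eq : ∀ t ≥ (0 : ℝ), g t =
      1 - Real.exp (-f t) * G (1 - ∫ s in Set.Ioi (0 : ℝ), g (t + s) * φ s)) :
    ∀ t ≥ (0 : ℝ), H (g t) ≤ 1 - Real.exp (-f t) ∧ 1 - Real.exp (-f t) ≤ f t := by
  -- Summability of p
  have hsum : Summable p := by
    by_contra h
    rw [tsum_eq_zero_of_not_summable h] at hp_sum
    norm_num at hp_sum
  have hsum' : ∀ s ∈ Icc (0 : ℝ) 1, Summable (fun k => p k * s ^ k) := by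
    intro s hs
    refine Summable.of_nonneg_of_le
      (fun k => mul_nonneg (hp_nonneg k) (pow_nonneg hs.1 k)) (fun k => ?_) hsum
    have : s ^ k ≤ 1 := pow_le_one₀ hs.1 hs.2
    nlinarith [hp_nonneg k]
  -- G is monotone on [0,1]
  have hGmono : ∀ a b : ℝ, a ∈ Icc (0:ℝ) 1 → b ∈ Icc (0:ℝ) 1 → a ≤ b → G a ≤ G b := by
    intro a b ha hb hab
    rw [hG a, hG b]
    exact Summable.tsum_le_tsum
      (fun k => mul_le_mul_of_nonneg_left (pow_le_pow_left₀ ha.1 hab k) (hp_nonneg k))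
      (hsum' a ha) (hsum' b hb)
  -- G ≤ 1 on [0,1]
  have hGle1 : ∀ s ∈ Icc (0:ℝ) 1, G s ≤ 1 := by
    intro s hs
    rw [hG s, ← hp_sum]
    refine Summable.tsum_le_tsum (fun k => ?_) (hsum' s hs) hsum
    have : s ^ k ≤ 1 := pow_le_one₀ hs.1 hs.2
    nlinarith [hp_nonneg k]
  -- integrability of φ on (0,∞)
  have hφ_integ : IntegrableOn φ (Ioi (0 : ℝ)) := by
    by_contra h
    rw [integral_undef h] at hφ_int
    norm_num at hφ_int
  intro t ht
  refine ⟨?_, by nlinarith [Real.add_one_le_exp (-f t)]⟩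
  set I := ∫ s in Set.Ioi (0 : ℝ), g (t + s) * φ s with hIdef
  have hint : IntegrableOn (fun s => g (t + s) * φ s) (Ioi (0 : ℝ)) := by
    refine MeasureTheory.Integrable.mono hφ_integ
      (((hg_meas.comp (measurable_const.add measurable_id)).mul hφ_meas).aestronglyMeasurable)
      (Filter.Eventually.of_forall fun s => ?_)
    rw [Real.norm_eq_abs, Real.norm_eq_abs,
      abs_of_nonneg (mul_nonneg (hg_mem (t+s)).1 (hφ_nonneg s)), abs_of_nonneg (hφ_nonneg s)]
    nlinarith [(hg_mem (t+s)).1, (hg_mem (t+s)).2, hφ_nonneg s]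
  have hI_nonneg : 0 ≤ I :=
    setIntegral_nonneg measurableSet_Ioi fun s _ => mul_nonneg (hg_mem (t+s)).1 (hφ_nonneg s)
  have hI_le : I ≤ g t := by
    have h1 : I ≤ ∫ s in Set.Ioi (0 : ℝ), g t * φ s := by
      refine setIntegral_mono_on hint (hφ_integ.const_mul (g t)) measurableSet_Ioi
        fun s hs => ?_
      have hts : (0:ℝ) ≤ t + s := by
        have : (0:ℝ) < s := hs
        linarith
      exact mul_le_mul_of_nonneg_right
        (hg_anti ht hts (by linarith [show (0:ℝ) < s from hs])) (hφ_nonneg s)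
    have h2 : ∫ s in Set.Ioi (0 : ℝ), g t * φ s = g t := by
      rw [MeasureTheory.integral_const_mul, hφ_int, mul_one]
    linarith
  have hgt := hg_eq t ht
  have hgm := hg_mem t
  have hE0 : 0 < Real.exp (-f t) := Real.exp_pos _
  have hE1 : Real.exp (-f t) ≤ 1 := by
    calc Real.exp (-f t) ≤ Real.exp 0 := Real.exp_le_exp.2 (by linarith [hf_nonneg t])
      _ = 1 := Real.exp_zero
  have h1gI : (1 - I) ∈ Icc (0:ℝ) 1 := ⟨by linarith [hgm.2], by linarith⟩
  have h1gt : (1 - g t) ∈ Icc (0:ℝ) 1 := ⟨by linarith [hgm.2], by linarith [hgm.1]⟩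
  have hmono : G (1 - g t) ≤ G (1 - I) := hGmono _ _ h1gt h1gI (by linarith)
  have hQ1 : G (1 - I) ≤ 1 := hGle1 _ h1gI
  rw [hH]
  nlinarith [mul_nonneg (sub_nonneg.2 hQ1) (sub_nonneg.2 hE1)]
end

section
/- Under Assumption B, for f a step function as described and (g_T) a family of solutions as described, there exist T₀ ≥ 1 and C > 0 such that for all T ≥ T₀ and all t ≥ 0 one has T·g_T(tT) ≤ C f(t)^{1/(1+β)}; consequently limsup_{T→∞} ∫_0^∞ g_T(t) dt ≤ C ∫_0^∞ f(t)^{1/(1+β)} dt < ∞, and sup_{t≥0} g_T(t) → 0 as T → ∞. -/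
/-!
Fix `T ≥ 1`, `t ≥ 0`, and put `x = g_T(tT)` and `y = f_T(tT) = T^{-(1+β)} f(t)`. Since `g_T` is
nonincreasing, the average `q = ∫ g_T(tT + s) φ(s) ds` lies in `[0, x]`, so monotonicity of `G`
turns the equation into `x ≤ 1 - e^{-y} G(1 - x) = 1 - e^{-y} (1 - x + H(x))`, i.e.
`H(x) ≤ y e^y ≤ e^{sup f} y`. Near `0` we have `H(x) ≥ (K/2) x^{1+β}`, and monotonicity of `H`
extends this to `H(x) ≥ c x^{1+β}` on `[0,1]`; solving for `x` gives
`T g_T(tT) ≤ C f(t)^{1/(1+β)}`. The integral bound follows by the substitution `t ↦ t/T`, and the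
supremum bound from `T g_T ≤ C (sup f)^{1/(1+β)}`.
-/

open MeasureTheory Filter Set Real Topology

theorem summable_of_tsum_eq_one {p : ℕ → ℝ} (hp : ∑' k, p k = 1) : Summable p := by
  by_contra h
  simp [tsum_eq_zero_of_not_summable h] at hp

theorem monotoneOn_tsum_mul_pow {p : ℕ → ℝ} (hp0 : ∀ k, 0 ≤ p k) (hp : Summable p) :
    MonotoneOn (fun s => ∑' k, p k * s ^ k) (Icc 0 1) := by
  have hsum : ∀ s ∈ Icc (0 : ℝ) 1, Summable fun k => p k * s ^ k := fun s hs =>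
    hp.of_nonneg_of_le (fun k => mul_nonneg (hp0 k) (pow_nonneg hs.1 k))
      (fun k => mul_le_of_le_one_right (hp0 k) (pow_le_one₀ hs.1 hs.2))
  intro u hu v hv huv
  exact (hsum u hu).tsum_le_tsum
    (fun k => mul_le_mul_of_nonneg_left (pow_le_pow_left₀ hu.1 huv k) (hp0 k)) (hsum v hv)

theorem exists_mul_rpow_le_of_monotoneOn {H W : ℝ → ℝ} {K r : ℝ} (hK : 0 < K) (hr : 0 < r)
    (hH : MonotoneOn H (Icc 0 1)) (hW : Tendsto W (𝓝[>] 0) (𝓝 1))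
    (hHW : ∀ x ∈ Icc (0 : ℝ) 1, H x = K * x ^ r * W x) :
    ∃ c > 0, ∀ x ∈ Icc (0 : ℝ) 1, c * x ^ r ≤ H x := by
  obtain ⟨δ, hδ, hWδ⟩ : ∃ δ ∈ Ioc (0 : ℝ) 1, ∀ x ∈ Ioc 0 δ, 1 / 2 ≤ W x := by
    obtain ⟨u, hu, hsub⟩ := mem_nhdsGT_iff_exists_Ioc_subset.1
      (hW.eventually (eventually_ge_nhds (by norm_num : (1 : ℝ) / 2 < 1)))
    exact ⟨min u 1, ⟨lt_min hu one_pos, min_le_right _ _⟩,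
      fun x hx => hsub ⟨hx.1, hx.2.trans (min_le_left _ _)⟩⟩
  have hδr : δ ^ r ≤ 1 := rpow_le_one hδ.1.le hδ.2 hr.le
  have hsmall : ∀ x ∈ Ioc 0 δ, K / 2 * x ^ r ≤ H x := fun x hx => by
    rw [hHW x ⟨hx.1.le, hx.2.trans hδ.2⟩, mul_right_comm]
    have := mul_le_mul_of_nonneg_left (hWδ x hx) hK.le
    exact mul_le_mul_of_nonneg_right (by linarith) (rpow_nonneg hx.1.le r)
  refine ⟨K / 2 * δ ^ r, by have := rpow_pos_of_pos hδ.1 r; positivity, fun x hx => ?_⟩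
  have hxr : x ^ r ≤ 1 := rpow_le_one hx.1 hx.2 hr.le
  rcases hx.1.eq_or_lt with rfl | hx0
  · rw [hHW 0 ⟨le_rfl, zero_le_one⟩, zero_rpow hr.ne']
    simp
  rcases le_or_gt x δ with hxδ | hδx
  · calc K / 2 * δ ^ r * x ^ r ≤ K / 2 * x ^ r := by
          rw [mul_right_comm]
          exact mul_le_of_le_one_right (by have := rpow_nonneg hx.1 r; positivity) hδr
      _ ≤ H x := hsmall x ⟨hx0, hxδ⟩
  · calc K / 2 * δ ^ r * x ^ r ≤ K / 2 * δ ^ r :=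
          mul_le_of_le_one_right (by have := rpow_nonneg hδ.1.le r; positivity) hxr
      _ ≤ H δ := hsmall δ ⟨hδ.1, le_rfl⟩
      _ ≤ H x := hH ⟨hδ.1.le, hδ.2⟩ hx hδx.le

theorem le_mul_exp_of_eq_one_sub_exp_neg_mul {G : ℝ → ℝ} (hG : MonotoneOn G (Icc 0 1))
    {x q c : ℝ} (hx : x ∈ Icc (0 : ℝ) 1) (hq : q ∈ Icc 0 x) (hc : 0 ≤ c)
    (heq : x = 1 - exp (-c) * G (1 - q)) : G (1 - x) - 1 + x ≤ c * exp c := by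
  obtain ⟨hx0, hx1⟩ := hx
  obtain ⟨hq0, hqx⟩ := hq
  have hGq : G (1 - x) ≤ G (1 - q) :=
    hG ⟨by linarith, by linarith⟩ ⟨by linarith, by linarith⟩ (by linarith)
  have hGx : G (1 - x) ≤ exp c * (1 - x) := by
    have : exp (-c) * G (1 - x) ≤ 1 - x := by nlinarith [exp_pos (-c)]
    rwa [exp_neg, inv_mul_le_iff₀ (exp_pos c)] at this
  have hexp : exp c - 1 ≤ c * exp c := by
    have h := mul_le_mul_of_nonneg_left (add_one_le_exp (-c)) (exp_pos c).le
    rw [← exp_add, add_neg_cancel, exp_zero] at h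
    linarith
  nlinarith [one_le_exp hc]

theorem setIntegral_comp_add_mul_mem_Icc {g φ : ℝ → ℝ} (hg0 : ∀ s ∈ Ici 0, 0 ≤ g s)
    (hg : AntitoneOn g (Ici 0)) (hφ0 : ∀ s, 0 ≤ φ s) (hφ : ∫ s in Ioi 0, φ s = 1) {t : ℝ}
    (ht : 0 ≤ t) : ∫ s in Ioi 0, g (t + s) * φ s ∈ Icc 0 (g t) := by
  have hφi : IntegrableOn φ (Ioi 0) := Integrable.of_integral_ne_zero (by rw [hφ]; norm_num)
  have hts : ∀ s ∈ Ioi (0 : ℝ), t + s ∈ Ici 0 := fun s hs => by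
    simp only [mem_Ici]; linarith [mem_Ioi.1 hs]
  refine ⟨setIntegral_nonneg measurableSet_Ioi fun s hs =>
    mul_nonneg (hg0 _ (hts s hs)) (hφ0 s), ?_⟩
  calc ∫ s in Ioi 0, g (t + s) * φ s ≤ ∫ s in Ioi 0, g t * φ s :=
        setIntegral_mono_of_nonneg (fun s hs => mul_nonneg (hg0 _ (hts s hs)) (hφ0 s))
          (fun s hs => mul_le_mul_of_nonneg_right
            (hg ht (hts s hs) (le_add_of_nonneg_right (mem_Ioi.1 hs).le)) (hφ0 s))
          (hφi.const_mul _)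
    _ = g t := by rw [integral_const_mul, hφ, mul_one]

theorem mul_le_rpow_of_mul_rpow_le {r c A T x y : ℝ} (hr : 0 < r) (hc : 0 < c) (hA : 0 ≤ A)
    (hT : 0 < T) (hx : 0 ≤ x) (hy : 0 ≤ y) (h : c * x ^ r ≤ A * (T ^ (-r) * y)) :
    T * x ≤ (A / c) ^ (1 / r) * y ^ (1 / r) := by
  have hpow : (T * x) ^ r ≤ A / c * y :=
    calc (T * x) ^ r = T ^ r * x ^ r := mul_rpow hT.le hx
      _ ≤ T ^ r * (A / c * (T ^ (-r) * y)) := by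
          gcongr
          rwa [div_mul_eq_mul_div, le_div_iff₀ hc, mul_comm]
      _ = A / c * y := by
          rw [rpow_neg hT.le]
          field_simp
  calc T * x = ((T * x) ^ r) ^ (1 / r) := by
        rw [← rpow_mul (by positivity), mul_one_div_cancel hr.ne', rpow_one]
    _ ≤ (A / c * y) ^ (1 / r) := rpow_le_rpow (by positivity) hpow (by positivity)
    _ = (A / c) ^ (1 / r) * y ^ (1 / r) := mul_rpow (by positivity) hy

theorem mul_le_rpow_of_eq_one_sub_exp_neg_mul {G H g φ : ℝ → ℝ} {c r B T t F : ℝ}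
    (hG : MonotoneOn G (Icc 0 1)) (hH : ∀ u, H u = G (1 - u) - 1 + u) (hc : 0 < c) (hr : 0 < r)
    (hHc : ∀ x ∈ Icc (0 : ℝ) 1, c * x ^ r ≤ H x) (hφ0 : ∀ s, 0 ≤ φ s)
    (hφ : ∫ s in Ioi 0, φ s = 1) (hg_mem : ∀ s, g s ∈ Icc (0 : ℝ) 1)
    (hg_anti : AntitoneOn g (Ici 0)) (hT : 1 ≤ T) (ht : 0 ≤ t) (hF0 : 0 ≤ F) (hFB : F ≤ B)
    (heq : g t = 1 - exp (-(T ^ (-r) * F)) * G (1 - ∫ s in Ioi 0, g (t + s) * φ s)) :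
    T * g t ≤ (exp B / c) ^ (1 / r) * F ^ (1 / r) := by
  have hTr : T ^ (-r) ≤ 1 := rpow_le_one_of_one_le_of_nonpos hT (by linarith)
  have hy0 : 0 ≤ T ^ (-r) * F := mul_nonneg (by positivity) hF0
  have hyB : T ^ (-r) * F ≤ B := (mul_le_of_le_one_left hF0 hTr).trans hFB
  refine mul_le_rpow_of_mul_rpow_le hr hc (exp_pos B).le (by positivity) (hg_mem t).1 hF0 ?_
  calc c * g t ^ r ≤ H (g t) := hHc _ (hg_mem t)
    _ ≤ T ^ (-r) * F * exp (T ^ (-r) * F) := by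
        rw [hH]
        exact le_mul_exp_of_eq_one_sub_exp_neg_mul hG (hg_mem t)
          (setIntegral_comp_add_mul_mem_Icc (fun s _ => (hg_mem s).1) hg_anti hφ0 hφ ht) hy0 heq
    _ ≤ exp B * (T ^ (-r) * F) := by rw [mul_comm]; gcongr

theorem integrableOn_Ioi_of_bounded_of_eq_zero {F : ℝ → ℝ} {M a : ℝ} (hF : Measurable F)
    (hM : ∀ t, ‖F t‖ ≤ M) (ha : ∀ t, a < t → F t = 0) : IntegrableOn F (Ioi 0) := by
  have hIoc : IntegrableOn F (Ioc 0 a) :=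
    Measure.integrableOn_of_bounded measure_Ioc_lt_top.ne hF.aestronglyMeasurable
      (ae_of_all _ hM)
  have hIoi : IntegrableOn F (Ioi a) :=
    integrableOn_zero.congr_fun (fun t ht => (ha t ht).symm) measurableSet_Ioi
  refine (hIoc.union hIoi).mono_set fun t ht => ?_
  rcases le_or_gt t a with h | h
  exacts [Or.inl ⟨ht, h⟩, Or.inr h]

noncomputable def stepFun (m : ℕ) (θ tk : ℕ → ℝ) (t : ℝ) : ℝ :=
  ∑ k ∈ Finset.range m, (Icc 0 (tk k)).indicator (fun _ => θ k) t

section stepFun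

variable {m : ℕ} {θ tk : ℕ → ℝ}

theorem measurable_stepFun : Measurable (stepFun m θ tk) :=
  Finset.measurable_sum _ fun _ _ => measurable_const.indicator measurableSet_Icc

theorem stepFun_nonneg (hθ : ∀ k < m, 0 ≤ θ k) (t : ℝ) : 0 ≤ stepFun m θ tk t :=
  Finset.sum_nonneg fun k hk => indicator_nonneg (fun _ _ => hθ k (Finset.mem_range.1 hk)) t

theorem stepFun_le_sum (hθ : ∀ k < m, 0 ≤ θ k) (t : ℝ) :
    stepFun m θ tk t ≤ ∑ k ∈ Finset.range m, θ k :=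
  Finset.sum_le_sum fun k hk =>
    indicator_apply_le' (fun _ => le_rfl) (fun _ => hθ k (Finset.mem_range.1 hk))

theorem stepFun_eq_zero_of_lt {a t : ℝ} (ha : ∀ k < m, tk k ≤ a) (ht : a < t) :
    stepFun m θ tk t = 0 :=
  Finset.sum_eq_zero fun k hk => indicator_of_notMem
    (fun hmem => (hmem.2.trans (ha k (Finset.mem_range.1 hk))).not_gt ht) _

theorem integrableOn_stepFun_rpow {a q : ℝ} (hθ : ∀ k < m, 0 ≤ θ k) (ha : ∀ k < m, tk k ≤ a)
    (hq : 0 < q) : IntegrableOn (fun t => stepFun m θ tk t ^ q) (Ioi 0) :=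
  integrableOn_Ioi_of_bounded_of_eq_zero (measurable_stepFun.pow_const _)
    (fun t => by
      rw [norm_of_nonneg (rpow_nonneg (stepFun_nonneg hθ t) _)]
      exact rpow_le_rpow (stepFun_nonneg hθ t) (stepFun_le_sum hθ t) hq.le)
    (fun t ht => by rw [stepFun_eq_zero_of_lt ha ht, zero_rpow hq.ne'])

end stepFun

theorem setIntegral_le_of_mul_le_comp_mul {g F : ℝ → ℝ} {T C : ℝ} (hT : 0 < T)
    (hg : ∀ t > 0, 0 ≤ g t) (hF : IntegrableOn F (Ioi 0))
    (hle : ∀ t > 0, T * g (t * T) ≤ C * F t) :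
    ∫ t in Ioi 0, g t ≤ C * ∫ t in Ioi 0, F t := by
  have hFT : IntegrableOn (fun s => F (s * T⁻¹)) (Ioi 0) :=
    (integrableOn_Ioi_comp_mul_right_iff F 0 (inv_pos.2 hT)).2 (by rwa [zero_mul])
  calc ∫ s in Ioi 0, g s ≤ ∫ s in Ioi 0, C / T * F (s * T⁻¹) := by
        refine setIntegral_mono_of_nonneg hg (fun s hs => ?_) (hFT.const_mul _)
        have h := hle (s * T⁻¹) (mul_pos hs (inv_pos.2 hT))
        rw [inv_mul_cancel_right₀ hT.ne'] at h
        rw [div_mul_eq_mul_div, le_div_iff₀ hT]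
        linarith
    _ = C * ∫ t in Ioi 0, F t := by
        rw [integral_const_mul, integral_comp_mul_right_Ioi F 0 (inv_pos.2 hT), zero_mul,
          inv_inv, smul_eq_mul]
        field_simp

theorem limsup_setIntegral_le {g : ℝ → ℝ → ℝ} {F : ℝ → ℝ} {C : ℝ}
    (hg : ∀ᶠ T in atTop, ∀ t > 0, 0 ≤ g T t) (hF : IntegrableOn F (Ioi 0))
    (hle : ∀ᶠ T in atTop, ∀ t > 0, T * g T (t * T) ≤ C * F t) :
    limsup (fun T => ∫ t in Ioi 0, g T t) atTop ≤ C * ∫ t in Ioi 0, F t := by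
  refine limsup_le_of_le (isCoboundedUnder_le_of_eventually_le atTop (x := 0) ?_) ?_
  · filter_upwards [hg] with T hT using setIntegral_nonneg measurableSet_Ioi hT
  · filter_upwards [hg, hle, eventually_gt_atTop 0] with T hgT hleT hT
    exact setIntegral_le_of_mul_le_comp_mul hT hgT hF hleT

theorem tendsto_iSup_Ici_of_mul_le {g : ℝ → ℝ → ℝ} {M : ℝ}
    (hg : ∀ᶠ T in atTop, ∀ t ≥ 0, 0 ≤ g T t)
    (hle : ∀ᶠ T in atTop, ∀ t ≥ 0, T * g T (t * T) ≤ M) :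
    Tendsto (fun T => ⨆ t : Ici (0 : ℝ), g T t) atTop (𝓝 0) := by
  refine tendsto_of_tendsto_of_tendsto_of_le_of_le' tendsto_const_nhds
    ((tendsto_const_nhds (x := M)).div_atTop tendsto_id) ?_ ?_
  · filter_upwards [hg] with T hT using Real.iSup_nonneg fun t => hT t t.2
  · filter_upwards [hle, eventually_gt_atTop 0] with T hleT hT
    refine ciSup_le fun t => ?_
    have h := hleT (t / T) (div_nonneg t.2 hT.le)
    rw [div_mul_cancel₀ _ hT.ne'] at h
    rwa [id, le_div_iff₀ hT, mul_comm]

theorem stmt7_general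
    -- Assumption B: mean-one offspring distribution with generating function G
    (p : ℕ → ℝ) (hp_nonneg : ∀ k, 0 ≤ p k)
    (hp_sum : ∑' k, p k = 1)
    (G H : ℝ → ℝ)
    (hG : ∀ s, G s = ∑' k, p k * s ^ k)
    (hH : ∀ u, H u = G (1 - u) - 1 + u)
    (β K : ℝ) (hβ : β ∈ Ioo (0 : ℝ) 1) (hK : 0 < K)
    (W : ℝ → ℝ)
    (hW_lim : Tendsto W (nhdsWithin 0 (Ioi 0)) (nhds 1))
    (hHW : ∀ x ∈ Icc (0 : ℝ) 1, H x = K * x ^ (1 + β) * W x)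
    (C₀ : ℝ)
    (hH_lip : ∀ x y : ℝ, 0 ≤ x → x ≤ y → y ≤ 1 →
      0 ≤ H y - H x ∧ H y - H x ≤ C₀ * (y - x) * y ^ β)
    -- φ : probability density on [0,∞)
    (φ : ℝ → ℝ) (hφ_nonneg : ∀ t, 0 ≤ φ t)
    (hφ_int : ∫ t in Set.Ioi (0 : ℝ), φ t = 1)
    -- the step function f and its scalings f_T
    (m : ℕ) (θ tk : ℕ → ℝ)
    (hθ : ∀ k < m, 0 ≤ θ k)
    (a : ℝ) (ha_max : ∀ k < m, tk k ≤ a)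
    (f : ℝ → ℝ)
    (hf : ∀ t, f t = ∑ k ∈ Finset.range m,
      Set.indicator (Icc (0 : ℝ) (tk k)) (fun _ => θ k) t)
    (fT : ℝ → ℝ → ℝ)
    (hfT : ∀ T t, fT T t = T ^ (-(1 + β)) * f (t / T))
    -- the family of solutions g_T
    (g : ℝ → ℝ → ℝ)
    (hg_mem : ∀ T ≥ (1 : ℝ), ∀ t, g T t ∈ Icc (0 : ℝ) 1)
    (hg_anti : ∀ T ≥ (1 : ℝ), AntitoneOn (g T) (Ici 0))
    (hg_eq : ∀ T ≥ (1 : ℝ), ∀ t ≥ (0 : ℝ), g T t =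
      1 - Real.exp (-(fT T t)) *
        G (1 - ∫ s in Set.Ioi (0 : ℝ), g T (t + s) * φ s)) :
    ∃ T₀ ≥ (1 : ℝ), ∃ C > (0 : ℝ),
      (∀ T ≥ T₀, ∀ t ≥ (0 : ℝ), T * g T (t * T) ≤ C * f t ^ (1 / (1 + β))) ∧
      IntegrableOn (fun t => f t ^ (1 / (1 + β))) (Ioi (0 : ℝ)) ∧
      Filter.limsup (fun T => ∫ t in Set.Ioi (0 : ℝ), g T t) atTop ≤
        C * ∫ t in Set.Ioi (0 : ℝ), f t ^ (1 / (1 + β)) ∧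
      Tendsto (fun T => ⨆ t : Ici (0 : ℝ), g T ↑t) atTop (nhds 0) := by
  obtain rfl : f = stepFun m θ tk := funext hf
  have hr : 0 < 1 + β := by linarith [hβ.1]
  have hGmono : MonotoneOn G (Icc 0 1) := by
    rw [funext hG]
    exact monotoneOn_tsum_mul_pow hp_nonneg (summable_of_tsum_eq_one hp_sum)
  have hHmono : MonotoneOn H (Icc 0 1) := fun x hx y hy hxy =>
    sub_nonneg.1 (hH_lip x y hx.1 hxy hy.2).1
  obtain ⟨c, hc, hHc⟩ := exists_mul_rpow_le_of_monotoneOn hK hr hHmono hW_lim hHW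
  set B := ∑ k ∈ Finset.range m, θ k
  set C := (exp B / c) ^ (1 / (1 + β))
  have hbound : ∀ T ≥ (1 : ℝ), ∀ t ≥ (0 : ℝ),
      T * g T (t * T) ≤ C * stepFun m θ tk t ^ (1 / (1 + β)) := fun T hT t ht =>
    mul_le_rpow_of_eq_one_sub_exp_neg_mul hGmono hH hc hr hHc hφ_nonneg hφ_int (hg_mem T hT)
      (hg_anti T hT) hT (by positivity) (stepFun_nonneg hθ t) (stepFun_le_sum hθ t) (by
        rw [hg_eq T hT _ (by positivity), hfT, mul_div_cancel_right₀ _ (by positivity)])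
  have hFint := integrableOn_stepFun_rpow hθ ha_max (one_div_pos.2 hr)
  have hg0 : ∀ᶠ T in atTop, ∀ t, 0 ≤ g T t :=
    (eventually_ge_atTop 1).mono fun T hT t => (hg_mem T hT t).1
  have hbound_sup : ∀ T ≥ (1 : ℝ), ∀ t ≥ (0 : ℝ), T * g T (t * T) ≤ C * B ^ (1 / (1 + β)) :=
    fun T hT t ht => (hbound T hT t ht).trans <| mul_le_mul_of_nonneg_left
      (rpow_le_rpow (stepFun_nonneg hθ t) (stepFun_le_sum hθ t) (by positivity)) (by positivity)
  refine ⟨1, le_rfl, C, by positivity, hbound, hFint,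
    limsup_setIntegral_le (hg0.mono fun T h t _ => h t) hFint
      ((eventually_ge_atTop 1).mono fun T hT t ht => hbound T hT t ht.le),
    tendsto_iSup_Ici_of_mul_le (hg0.mono fun T h t _ => h t)
      ((eventually_ge_atTop 1).mono hbound_sup)⟩

/-- Under Assumption B, for a nonnegative step function `f`
with support `[0,a]` and a family `(g_T)` of solutions of the basic equation
(with `f_T(t) = T^{-(1+β)} f(t/T)`), there are `T₀ ≥ 1` and `C > 0` with
`T g_T(tT) ≤ C f(t)^{1/(1+β)}` for all `T ≥ T₀`, `t ≥ 0`; consequently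
`f^{1/(1+β)}` is integrable,
`limsup_{T→∞} ∫_0^∞ g_T ≤ C ∫_0^∞ f^{1/(1+β)} < ∞`, and
`sup_{t ≥ 0} g_T(t) → 0` as `T → ∞`. -/
theorem stmt7
    -- Assumption B: mean-one offspring distribution with generating function G
    (p : ℕ → ℝ) (hp_nonneg : ∀ k, 0 ≤ p k)
    (hp_sum : ∑' k, p k = 1)
    (hp_mean : ∑' k : ℕ, (k : ℝ) * p k = 1)
    (G H : ℝ → ℝ)
    (hG : ∀ s, G s = ∑' k, p k * s ^ k)
    (hH : ∀ u, H u = G (1 - u) - 1 + u)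
    (β K : ℝ) (hβ : β ∈ Ioo (0 : ℝ) 1) (hK : 0 < K)
    (W : ℝ → ℝ) (hW_nonneg : ∀ x ∈ Icc (0 : ℝ) 1, 0 ≤ W x)
    (hW_bdd : ∃ M, ∀ x ∈ Icc (0 : ℝ) 1, W x ≤ M)
    (hW_lim : Tendsto W (nhdsWithin 0 (Ioi 0)) (nhds 1))
    (hHW : ∀ x ∈ Icc (0 : ℝ) 1, H x = K * x ^ (1 + β) * W x)
    (C₀ : ℝ) (hC₀ : 0 < C₀)
    (hH_lip : ∀ x y : ℝ, 0 ≤ x → x ≤ y → y ≤ 1 →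
      0 ≤ H y - H x ∧ H y - H x ≤ C₀ * (y - x) * y ^ β)
    -- φ : probability density on [0,∞)
    (φ : ℝ → ℝ) (hφ_meas : Measurable φ) (hφ_nonneg : ∀ t, 0 ≤ φ t)
    (hφ_zero : ∀ t < 0, φ t = 0)
    (hφ_int : ∫ t in Set.Ioi (0 : ℝ), φ t = 1)
    -- the step function f and its scalings f_T
    (m : ℕ) (hm : 0 < m) (θ tk : ℕ → ℝ)
    (hθ : ∀ k < m, 0 ≤ θ k) (htk : ∀ k < m, 0 < tk k)
    (a : ℝ) (ha_mem : ∃ k < m, tk k = a) (ha_max : ∀ k < m, tk k ≤ a)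
    (f : ℝ → ℝ)
    (hf : ∀ t, f t = ∑ k ∈ Finset.range m,
      Set.indicator (Icc (0 : ℝ) (tk k)) (fun _ => θ k) t)
    (fT : ℝ → ℝ → ℝ)
    (hfT : ∀ T t, fT T t = T ^ (-(1 + β)) * f (t / T))
    -- the family of solutions g_T
    (g : ℝ → ℝ → ℝ)
    (hg_meas : ∀ T, Measurable (g T))
    (hg_mem : ∀ T ≥ (1 : ℝ), ∀ t, g T t ∈ Icc (0 : ℝ) 1)
    (hg_anti : ∀ T ≥ (1 : ℝ), AntitoneOn (g T) (Ici 0))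
    (hg_supp : ∀ T ≥ (1 : ℝ), ∀ t, T * a < t → g T t = 0)
    (hg_eq : ∀ T ≥ (1 : ℝ), ∀ t ≥ (0 : ℝ), g T t =
      1 - Real.exp (-(fT T t)) *
        G (1 - ∫ s in Set.Ioi (0 : ℝ), g T (t + s) * φ s)) :
    ∃ T₀ ≥ (1 : ℝ), ∃ C > (0 : ℝ),
      (∀ T ≥ T₀, ∀ t ≥ (0 : ℝ), T * g T (t * T) ≤ C * f t ^ (1 / (1 + β))) ∧
      IntegrableOn (fun t => f t ^ (1 / (1 + β))) (Ioi (0 : ℝ)) ∧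
      Filter.limsup (fun T => ∫ t in Set.Ioi (0 : ℝ), g T t) atTop ≤
        C * ∫ t in Set.Ioi (0 : ℝ), f t ^ (1 / (1 + β)) ∧
      Tendsto (fun T => ⨆ t : Ici (0 : ℝ), g T ↑t) atTop (nhds 0) :=
  stmt7_general p hp_nonneg hp_sum G H hG hH β K hβ hK W hW_lim hHW C₀ hH_lip φ hφ_nonneg hφ_int m θ
    tk hθ a ha_max f hf fT hfT g hg_mem hg_anti hg_eq
end

section
/- Let a > 0, β ∈ (0,1), B ≥ 0, C₁ > 0, and let A : [0,∞) → [0,∞) be a bounded Borel function vanishing outside [0,a] such that A(t) ≤ B + C₁ ∫_0^{a−t} A(t+s) s^{β−1} ds for all t ∈ [0,a]. Then for every σ > 0 with κ := C₁ Γ(β) σ^{−β} < 1 one has sup_{t∈[0,a]} A(t) ≤ e^{σa} B/(1 − κ). In particular, if the inequality holds for every B in a family with B → 0, then sup_{t∈[0,a]} A(t) → 0. -/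
/-! Bielecki's weighted norm: for `N = sup_{[0,a]} e^{σt} A(t)`, inserting `A(u) ≤ e^{-σu} N` into
the integral and using `∫_0^∞ s^{β-1} e^{-σs} ds = Γ(β) σ^{-β}` gives `e^{σt} A(t) ≤ e^{σa} B + κ N`,
hence `N ≤ e^{σa} B / (1 - κ)`. Since `κ → 0` as `σ → ∞`, one `σ` serves every `B` at once, so the
suprema are `O(B)`. -/

open MeasureTheory Filter Set Real

section GammaKernel

variable {β σ : ℝ}

lemma integrableOn_rpow_sub_one_mul_exp_neg_mul_Ioi (hβ : 0 < β) (hσ : 0 < σ) :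
    IntegrableOn (fun s : ℝ => s ^ (β - 1) * exp (-(σ * s))) (Ioi 0) := by
  simpa [rpow_one, neg_mul] using
    integrableOn_rpow_mul_exp_neg_mul_rpow (s := β - 1) (p := 1) (by linarith) one_pos hσ

lemma setIntegral_Ioc_rpow_sub_one_mul_exp_neg_mul_le (hβ : 0 < β) (hσ : 0 < σ) (c : ℝ) :
    ∫ s in Ioc 0 c, s ^ (β - 1) * exp (-(σ * s)) ≤ Gamma β / σ ^ β := by
  have hnonneg : 0 ≤ᵐ[volume.restrict (Ioi 0)] fun s : ℝ => s ^ (β - 1) * exp (-(σ * s)) :=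
    (ae_restrict_iff' measurableSet_Ioi).2 <| ae_of_all _ fun s hs =>
      mul_nonneg (rpow_nonneg (le_of_lt hs) _) (exp_pos _).le
  calc ∫ s in Ioc 0 c, s ^ (β - 1) * exp (-(σ * s))
      ≤ ∫ s in Ioi 0, s ^ (β - 1) * exp (-(σ * s)) :=
        setIntegral_mono_set (integrableOn_rpow_sub_one_mul_exp_neg_mul_Ioi hβ hσ) hnonneg
          (ae_of_all _ Ioc_subset_Ioi_self)
    _ = Gamma β / σ ^ β := by
        rw [integral_rpow_mul_exp_neg_mul_Ioi hβ hσ, div_rpow zero_le_one hσ.le, one_rpow]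
        ring

lemma setIntegral_Ioc_mul_rpow_sub_one_le {A : ℝ → ℝ} {a t N : ℝ} (hβ : 0 < β) (hσ : 0 < σ)
    (hA_nonneg : ∀ u, 0 ≤ A u) (hN : 0 ≤ N) (hAN : ∀ u ∈ Icc 0 a, A u ≤ exp (-(σ * u)) * N)
    (ht : 0 ≤ t) :
    ∫ s in Ioc 0 (a - t), A (t + s) * s ^ (β - 1) ≤ exp (-(σ * t)) * N * (Gamma β / σ ^ β) := by
  have hpoint : ∀ s ∈ Ioc 0 (a - t),
      A (t + s) * s ^ (β - 1) ≤ exp (-(σ * t)) * N * (s ^ (β - 1) * exp (-(σ * s))) := by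
    intro s hs
    calc A (t + s) * s ^ (β - 1) ≤ exp (-(σ * (t + s))) * N * s ^ (β - 1) :=
          mul_le_mul_of_nonneg_right (hAN _ ⟨by linarith [hs.1], by linarith [hs.2]⟩)
            (rpow_nonneg hs.1.le _)
      _ = exp (-(σ * t)) * N * (s ^ (β - 1) * exp (-(σ * s))) := by
          rw [mul_add, neg_add, exp_add]; ring
  calc ∫ s in Ioc 0 (a - t), A (t + s) * s ^ (β - 1)
      ≤ ∫ s in Ioc 0 (a - t), exp (-(σ * t)) * N * (s ^ (β - 1) * exp (-(σ * s))) := by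
        refine integral_mono_of_nonneg ?_ ?_ ?_
        · exact (ae_restrict_iff' measurableSet_Ioc).2 <| ae_of_all _ fun s hs =>
            mul_nonneg (hA_nonneg _) (rpow_nonneg hs.1.le _)
        · exact ((integrableOn_rpow_sub_one_mul_exp_neg_mul_Ioi hβ hσ).mono_set
            Ioc_subset_Ioi_self).const_mul _
        · exact (ae_restrict_iff' measurableSet_Ioc).2 <| ae_of_all _ hpoint
    _ = exp (-(σ * t)) * N * ∫ s in Ioc 0 (a - t), s ^ (β - 1) * exp (-(σ * s)) :=
        integral_const_mul _ _
    _ ≤ exp (-(σ * t)) * N * (Gamma β / σ ^ β) :=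
        mul_le_mul_of_nonneg_left (setIntegral_Ioc_rpow_sub_one_mul_exp_neg_mul_le hβ hσ _)
          (by positivity)

lemma exists_pos_div_rpow_lt_one (hβ : 0 < β) (c : ℝ) : ∃ σ > 0, c / σ ^ β < 1 := by
  have hlim : Tendsto (fun σ : ℝ => c / σ ^ β) atTop (nhds 0) :=
    tendsto_const_nhds.div_atTop (tendsto_rpow_atTop hβ)
  exact ((eventually_gt_atTop 0).and (hlim.eventually (gt_mem_nhds one_pos))).exists

end GammaKernel

lemma ciSup_le_div_one_sub_of_le_add_mul {ι : Type*} [Nonempty ι] {g : ι → ℝ} {b κ : ℝ}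
    (hκ : κ < 1) (hg : ∀ i, g i ≤ b + κ * ⨆ j, g j) : ⨆ i, g i ≤ b / (1 - κ) := by
  rw [le_div_iff₀ (by linarith)]
  linarith [ciSup_le hg]

theorem le_exp_mul_div_of_le_add_mul_setIntegral {a β B C σ : ℝ} {A : ℝ → ℝ}
    (ha : 0 ≤ a) (hβ : 0 < β) (hB : 0 ≤ B) (hC : 0 ≤ C) (hσ : 0 < σ)
    (hκ : C * Gamma β / σ ^ β < 1) (hA_nonneg : ∀ t, 0 ≤ A t) (hA_bdd : BddAbove (A '' Icc 0 a))
    (hA : ∀ t ∈ Icc 0 a, A t ≤ B + C * ∫ s in Ioc 0 (a - t), A (t + s) * s ^ (β - 1)) :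
    ∀ t ∈ Icc 0 a, A t ≤ exp (σ * a) * B / (1 - C * Gamma β / σ ^ β) := by
  have : Nonempty (Icc 0 a) := (nonempty_Icc.2 ha).to_subtype
  obtain ⟨M, hM⟩ := hA_bdd
  set g : Icc 0 a → ℝ := fun t => exp (σ * t) * A t
  have hexp_le (t : Icc 0 a) : exp (σ * t) ≤ exp (σ * a) :=
    exp_le_exp.2 (mul_le_mul_of_nonneg_left t.2.2 hσ.le)
  have hg_bdd : BddAbove (range g) := ⟨exp (σ * a) * M, by
    rintro _ ⟨t, rfl⟩
    exact mul_le_mul (hexp_le t) (hM ⟨t, t.2, rfl⟩) (hA_nonneg t) (exp_pos _).le⟩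
  set N := ⨆ t, g t
  have hN : 0 ≤ N := Real.iSup_nonneg fun t => mul_nonneg (exp_pos _).le (hA_nonneg t)
  have hAN : ∀ u ∈ Icc 0 a, A u ≤ exp (-(σ * u)) * N := fun u hu => by
    rw [exp_neg, ← div_eq_inv_mul, le_div_iff₀' (exp_pos _)]
    exact le_ciSup hg_bdd ⟨u, hu⟩
  have hN_le : N ≤ exp (σ * a) * B / (1 - C * Gamma β / σ ^ β) := by
    refine ciSup_le_div_one_sub_of_le_add_mul hκ fun t => ?_
    have hI := setIntegral_Ioc_mul_rpow_sub_one_le hβ hσ hA_nonneg hN hAN t.2.1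
    calc g t ≤ exp (σ * t) * (B + C * (exp (-(σ * t)) * N * (Gamma β / σ ^ β))) :=
          mul_le_mul_of_nonneg_left ((hA t t.2).trans (by gcongr)) (exp_pos _).le
      _ = exp (σ * t) * B + C * Gamma β / σ ^ β * N := by
          rw [exp_neg]; field_simp
      _ ≤ exp (σ * a) * B + C * Gamma β / σ ^ β * N := by gcongr; exact t.2.2
  intro t ht
  calc A t ≤ exp (σ * t) * A t :=
        le_mul_of_one_le_left (hA_nonneg t) (one_le_exp (mul_nonneg hσ.le ht.1))
    _ ≤ N := le_ciSup hg_bdd ⟨t, ht⟩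
    _ ≤ _ := hN_le

theorem stmt10_general
    (a β B C₁ : ℝ) (ha : 0 < a) (hβ : β ∈ Ioo (0 : ℝ) 1)
    (hB : 0 ≤ B) (hC₁ : 0 < C₁)
    (A : ℝ → ℝ) (hA_nonneg : ∀ t, 0 ≤ A t)
    (hA_bdd : ∃ M, ∀ t, A t ≤ M)
    (hA_ineq : ∀ t ∈ Icc (0 : ℝ) a,
      A t ≤ B + C₁ * ∫ s in Set.Ioc (0 : ℝ) (a - t), A (t + s) * s ^ (β - 1)) :
    (∀ σ > (0 : ℝ), C₁ * Real.Gamma β / σ ^ β < 1 →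
      ∀ t ∈ Icc (0 : ℝ) a,
        A t ≤ Real.exp (σ * a) * B / (1 - C₁ * Real.Gamma β / σ ^ β)) ∧
    (∀ (Bs : ℕ → ℝ) (As : ℕ → ℝ → ℝ),
      (∀ n, 0 ≤ Bs n) →
      (∀ n, Measurable (As n)) →
      (∀ n t, 0 ≤ As n t) →
      (∀ n, ∃ M, ∀ t, As n t ≤ M) →
      (∀ n t, t ∉ Icc (0 : ℝ) a → As n t = 0) →
      (∀ n, ∀ t ∈ Icc (0 : ℝ) a, As n t ≤ Bs n +
        C₁ * ∫ s in Set.Ioc (0 : ℝ) (a - t), As n (t + s) * s ^ (β - 1)) →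
      Tendsto Bs atTop (nhds 0) →
      Tendsto (fun n => ⨆ t : Icc (0 : ℝ) a, As n ↑t) atTop (nhds 0)) := by
  have bdd_image (f : ℝ → ℝ) : (∃ M, ∀ t, f t ≤ M) → BddAbove (f '' Icc 0 a) :=
    fun ⟨M, hM⟩ => ⟨M, forall_mem_image.2 fun t _ => hM t⟩
  refine ⟨fun σ hσ hκ => le_exp_mul_div_of_le_add_mul_setIntegral ha.le hβ.1 hB hC₁.le hσ hκ
    hA_nonneg (bdd_image A hA_bdd) hA_ineq, ?_⟩
  intro Bs As hBs _ hAs_nonneg hAs_bdd _ hAs hBs_lim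
  obtain ⟨σ, hσ, hκ⟩ := exists_pos_div_rpow_lt_one hβ.1 (C₁ * Gamma β)
  have hbound (n : ℕ) : ∀ t ∈ Icc 0 a, As n t ≤ exp (σ * a) * Bs n / (1 - C₁ * Gamma β / σ ^ β) :=
    le_exp_mul_div_of_le_add_mul_setIntegral ha.le hβ.1 (hBs n) hC₁.le hσ hκ (hAs_nonneg n)
      (bdd_image _ (hAs_bdd n)) (hAs n)
  refine squeeze_zero (fun n => Real.iSup_nonneg fun t => hAs_nonneg n t)
    (fun n => Real.iSup_le (fun t => hbound n t t.2) (by have := hBs n; positivity)) ?_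
  simpa using (hBs_lim.const_mul (exp (σ * a))).div_const (1 - C₁ * Gamma β / σ ^ β)

/-- a Gronwall-type estimate. If `A : [0,∞) → [0,∞)` is a
bounded Borel function vanishing outside `[0,a]` with
`A(t) ≤ B + C₁ ∫_0^{a-t} A(t+s) s^{β-1} ds` on `[0,a]`, then for every
`σ > 0` with `κ = C₁ Γ(β) σ^{-β} < 1` one has
`A(t) ≤ e^{σa} B / (1-κ)` on `[0,a]`. In particular, for a family of such
functions with constants `B → 0`, the suprema tend to `0`. -/
theorem stmt10
    (a β B C₁ : ℝ) (ha : 0 < a) (hβ : β ∈ Ioo (0 : ℝ) 1)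
    (hB : 0 ≤ B) (hC₁ : 0 < C₁)
    (A : ℝ → ℝ) (hA_meas : Measurable A) (hA_nonneg : ∀ t, 0 ≤ A t)
    (hA_bdd : ∃ M, ∀ t, A t ≤ M)
    (hA_supp : ∀ t, t ∉ Icc (0 : ℝ) a → A t = 0)
    (hA_ineq : ∀ t ∈ Icc (0 : ℝ) a,
      A t ≤ B + C₁ * ∫ s in Set.Ioc (0 : ℝ) (a - t), A (t + s) * s ^ (β - 1)) :
    (∀ σ > (0 : ℝ), C₁ * Real.Gamma β / σ ^ β < 1 →
      ∀ t ∈ Icc (0 : ℝ) a,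
        A t ≤ Real.exp (σ * a) * B / (1 - C₁ * Real.Gamma β / σ ^ β)) ∧
    (∀ (Bs : ℕ → ℝ) (As : ℕ → ℝ → ℝ),
      (∀ n, 0 ≤ Bs n) →
      (∀ n, Measurable (As n)) →
      (∀ n t, 0 ≤ As n t) →
      (∀ n, ∃ M, ∀ t, As n t ≤ M) →
      (∀ n t, t ∉ Icc (0 : ℝ) a → As n t = 0) →
      (∀ n, ∀ t ∈ Icc (0 : ℝ) a, As n t ≤ Bs n +
        C₁ * ∫ s in Set.Ioc (0 : ℝ) (a - t), As n (t + s) * s ^ (β - 1)) →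
      Tendsto Bs atTop (nhds 0) →
      Tendsto (fun n => ⨆ t : Icc (0 : ℝ) a, As n ↑t) atTop (nhds 0)) :=
  stmt10_general a β B C₁ ha hβ hB hC₁ A hA_nonneg hA_bdd hA_ineq
end

section
/- Let v : [0,∞) → [0,∞) be a bounded Borel solution of equation (E) vanishing outside [0,a]. Then v is β-Hölder continuous: there exists a constant C > 0 such that |v(t) − v(u)| ≤ C |t − u|^β for all t, u ≥ 0. -/
set_option autoImplicit false

open MeasureTheory Filter Set

/-- any bounded Borel solution of equation (E) vanishing
outside `[0,a]` is `β`-Hölder continuous on `[0,∞)`. -/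
theorem stmt12
    (β K c : ℝ) (hβ : β ∈ Ioo (0 : ℝ) 1) (hK : 0 < K) (hc : 0 < c)
    (m : ℕ) (hm : 0 < m) (θ tk : ℕ → ℝ)
    (hθ : ∀ k < m, 0 ≤ θ k) (htk : ∀ k < m, 0 < tk k)
    (a : ℝ) (ha_mem : ∃ k < m, tk k = a) (ha_max : ∀ k < m, tk k ≤ a)
    (f : ℝ → ℝ)
    (hf : ∀ t, f t = ∑ k ∈ Finset.range m,
      Set.indicator (Icc (0 : ℝ) (tk k)) (fun _ => θ k) t)
    (v : ℝ → ℝ)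
    (hv_meas : Measurable v) (hv_nonneg : ∀ t, 0 ≤ v t)
    (hv_bdd : ∃ M, ∀ t, v t ≤ M)
    (hv_supp : ∀ t, t ∉ Icc (0 : ℝ) a → v t = 0)
    (hv_eq : ∀ t ≥ (0 : ℝ), v t = β * c * ∫ s in Set.Ioi (0 : ℝ),
      (f (t + s) - K * v (t + s) ^ (1 + β)) * s ^ (β - 1)) :
    ∃ C > (0 : ℝ), ∀ t u : ℝ, 0 ≤ t → 0 ≤ u →
      |v t - v u| ≤ C * |t - u| ^ β := by
  obtain ⟨hβ0, hβ1⟩ := hβ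
  obtain ⟨M0, hM0⟩ := hv_bdd
  obtain ⟨k0, hk0m, hk0⟩ := ha_mem
  have ha_pos : 0 < a := hk0 ▸ htk k0 hk0m
  set M : ℝ := max M0 0 with hMdef
  have hvM : ∀ t, v t ≤ M := fun t => (hM0 t).trans (le_max_left _ _)
  set g : ℝ → ℝ := fun r => f r - K * v r ^ (1 + β) with hgdef
  set B : ℝ := (∑ k ∈ Finset.range m, θ k) + K * M ^ (1 + β) with hBdef
  have hS_nn : 0 ≤ ∑ k ∈ Finset.range m, θ k :=
    Finset.sum_nonneg fun k hk => hθ k (Finset.mem_range.1 hk)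
  have hB_nn : 0 ≤ B :=
    add_nonneg hS_nn (mul_nonneg hK.le (Real.rpow_nonneg (le_max_right _ _) _))
  have hf_nn : ∀ r, 0 ≤ f r := fun r => by
    rw [hf]
    exact Finset.sum_nonneg fun k hk =>
      Set.indicator_nonneg (fun _ _ => hθ k (Finset.mem_range.1 hk)) _
  have hf_le : ∀ r, f r ≤ ∑ k ∈ Finset.range m, θ k := fun r => by
    rw [hf]
    refine Finset.sum_le_sum fun k hk => ?_
    exact Set.indicator_apply_le' (fun _ => le_rfl) (fun _ => hθ k (Finset.mem_range.1 hk))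
  have hvpow_nn : ∀ r, 0 ≤ v r ^ (1 + β) := fun r => Real.rpow_nonneg (hv_nonneg r) _
  have hvpow_le : ∀ r, v r ^ (1 + β) ≤ M ^ (1 + β) := fun r =>
    Real.rpow_le_rpow (hv_nonneg r) (hvM r) (by linarith)
  have hg_bd : ∀ r, |g r| ≤ B := by
    intro r
    have h1 := mul_le_mul_of_nonneg_left (hvpow_le r) hK.le
    have h2 := mul_nonneg hK.le (hvpow_nn r)
    have h3 := hf_nn r
    have h4 := hf_le r
    rw [abs_le]
    constructor <;> simp only [hgdef, hBdef] <;> linarith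
  have hg_supp : ∀ r, r ∉ Icc (0 : ℝ) a → g r = 0 := by
    intro r hr
    have hfr : f r = 0 := by
      rw [hf]
      refine Finset.sum_eq_zero fun k hk => Set.indicator_of_notMem ?_ _
      exact fun hmem => hr ⟨hmem.1, hmem.2.trans (ha_max k (Finset.mem_range.1 hk))⟩
    have hvr : v r = 0 := hv_supp r hr
    simp only [hgdef, hfr, hvr]
    rw [Real.zero_rpow (by linarith : (1 : ℝ) + β ≠ 0)]
    ring
  have hf_meas : Measurable f := by
    have : f = fun t => ∑ k ∈ Finset.range m,
        Set.indicator (Icc (0 : ℝ) (tk k)) (fun _ => θ k) t := funext hf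
    rw [this]
    exact Finset.measurable_sum _ fun k _ => measurable_const.indicator measurableSet_Icc
  have hg_meas : Measurable g := by
    have hpow : Measurable fun r => v r ^ (1 + β) := by fun_prop
    exact hf_meas.sub (hpow.const_mul K)
  have hrpow_meas : Measurable fun s : ℝ => s ^ (β - 1) := by fun_prop
  have hII : ∀ x y : ℝ, IntervalIntegrable (fun s : ℝ => s ^ (β - 1)) volume x y :=
    fun x y => intervalIntegral.intervalIntegrable_rpow' (by linarith)
  -- integrability of the integrand
  have hInt : ∀ w, 0 ≤ w → IntegrableOn (fun s => g (w + s) * s ^ (β - 1)) (Ioi 0) := by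
    intro w hw
    have hsplit : Ioc (0 : ℝ) a ∪ Ioi a = Ioi 0 := Ioc_union_Ioi_eq_Ioi ha_pos.le
    rw [← hsplit]
    apply IntegrableOn.union
    · have hbd : IntegrableOn (fun s : ℝ => B * s ^ (β - 1)) (Ioc 0 a) :=
        ((intervalIntegrable_iff_integrableOn_Ioc_of_le ha_pos.le).1 (hII 0 a)).const_mul B
      refine Integrable.mono' hbd ?_ ?_
      · exact ((hg_meas.comp (measurable_const_add w)).mul hrpow_meas).aestronglyMeasurable
      · refine (ae_restrict_iff' measurableSet_Ioc).2 (ae_of_all _ fun s hs => ?_)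
        have h1 : 0 ≤ s ^ (β - 1) := Real.rpow_nonneg hs.1.le _
        rw [Real.norm_eq_abs, abs_mul, abs_of_nonneg h1]
        exact mul_le_mul_of_nonneg_right (hg_bd _) h1
    · rw [integrableOn_congr_fun (g := fun _ => (0 : ℝ)) ?_ measurableSet_Ioi]
      · exact integrableOn_zero
      · intro s hs
        have hs' : a < s := hs
        have : g (w + s) = 0 := hg_supp _ (fun hmem => absurd hmem.2 (by push_neg; linarith))
        simp [this]
  -- the key pointwise estimate
  have key : ∀ t u : ℝ, 0 ≤ t → t < u → |v t - v u| ≤ 2 * c * B * (u - t) ^ β := by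
    intro t u ht htu
    set δ : ℝ := u - t with hδdef
    have hδ : 0 < δ := by simp only [hδdef]; linarith
    have hu : (0 : ℝ) ≤ u := by linarith
    set G : ℝ → ℝ := fun s => g (t + s) * s ^ (β - 1) with hGdef
    set F : ℝ → ℝ := fun s => g (t + s) * (s - δ) ^ (β - 1) with hFdef
    have hcomp : ∀ x : ℝ, F (x + δ) = g (u + x) * x ^ (β - 1) := by
      intro x
      have e1 : t + (x + δ) = u + x := by simp only [hδdef]; ring
      have e2 : x + δ - δ = x := by ring
      simp only [hFdef, e1, e2]
    have hpre : (fun x : ℝ => x + δ) ⁻¹' Ioi δ = Ioi 0 := by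
      ext x; simp
    have hmp := measurePreserving_add_right (volume : Measure ℝ) δ
    have hemb := measurableEmbedding_addRight δ
    have hshift : (∫ s in Ioi (0 : ℝ), g (u + s) * s ^ (β - 1)) = ∫ s in Ioi δ, F s := by
      rw [← hmp.setIntegral_preimage_emb hemb F (Ioi δ), hpre]
      exact setIntegral_congr_fun measurableSet_Ioi fun x _ => (hcomp x).symm
    have hIntF : IntegrableOn F (Ioi δ) := by
      have h0 : IntegrableOn (F ∘ fun x => x + δ) ((fun x : ℝ => x + δ) ⁻¹' Ioi δ) := by
        rw [hpre]
        exact (integrableOn_congr_fun (fun x _ => hcomp x) measurableSet_Ioi).2 (hInt u hu)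
      exact (hmp.integrableOn_comp_preimage hemb).1 h0
    have hsplit : Ioc (0 : ℝ) δ ∪ Ioi δ = Ioi 0 := Ioc_union_Ioi_eq_Ioi hδ.le
    have hIntG : IntegrableOn G (Ioi 0) := hInt t ht
    have hIntG1 : IntegrableOn G (Ioc 0 δ) :=
      hIntG.mono_set (by rw [← hsplit]; exact subset_union_left)
    have hIntG2 : IntegrableOn G (Ioi δ) :=
      hIntG.mono_set (by rw [← hsplit]; exact subset_union_right)
    have hsplitInt : ∫ s in Ioi (0 : ℝ), G s = (∫ s in Ioc (0 : ℝ) δ, G s) + ∫ s in Ioi δ, G s := by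
      rw [← hsplit]
      exact setIntegral_union (Ioc_disjoint_Ioi le_rfl) measurableSet_Ioi hIntG1 hIntG2
    have hveqt : v t = β * c * ∫ s in Ioi (0 : ℝ), G s := hv_eq t ht
    have hvequ : v u = β * c * ∫ s in Ioi (0 : ℝ), g (u + s) * s ^ (β - 1) := hv_eq u hu
    have hdiff : v t - v u
        = β * c * ((∫ s in Ioc (0 : ℝ) δ, G s) + ∫ s in Ioi δ, (G s - F s)) := by
      rw [hveqt, hvequ, hshift, integral_sub hIntG2 hIntF, hsplitInt]
      ring
    -- restrict the second integral to a bounded interval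
    have hda : δ ≤ a + δ := by linarith
    have hDzero : ∀ s ∈ Ioi (a + δ), G s - F s = 0 := by
      intro s hs
      have hs' : a + δ < s := hs
      have hg0 : g (t + s) = 0 :=
        hg_supp _ (fun hmem => absurd hmem.2 (by push_neg; linarith))
      simp only [hGdef, hFdef, hg0]
      ring
    have hIntD : IntegrableOn (fun s => G s - F s) (Ioi δ) := hIntG2.sub hIntF
    have hsp2 : Ioc δ (a + δ) ∪ Ioi (a + δ) = Ioi δ := Ioc_union_Ioi_eq_Ioi hda
    have hIoi : (∫ s in Ioi δ, (G s - F s)) = ∫ s in Ioc δ (a + δ), (G s - F s) := by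
      rw [← hsp2, setIntegral_union (Ioc_disjoint_Ioi le_rfl) measurableSet_Ioi
        (hIntD.mono_set (by rw [← hsp2]; exact subset_union_left))
        (hIntD.mono_set (by rw [← hsp2]; exact subset_union_right)),
        setIntegral_eq_zero_of_forall_eq_zero hDzero, add_zero]
    -- bound 1
    have hb1 : |∫ s in Ioc (0 : ℝ) δ, G s| ≤ B * δ ^ β / β := by
      have hbd : IntegrableOn (fun s : ℝ => B * s ^ (β - 1)) (Ioc 0 δ) :=
        ((intervalIntegrable_iff_integrableOn_Ioc_of_le hδ.le).1 (hII 0 δ)).const_mul B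
      have h1 : |∫ s in Ioc (0 : ℝ) δ, G s| ≤ ∫ s in Ioc (0 : ℝ) δ, B * s ^ (β - 1) := by
        rw [← Real.norm_eq_abs]
        refine (norm_integral_le_integral_norm _).trans ?_
        refine setIntegral_mono_on hIntG1.norm hbd measurableSet_Ioc fun s hs => ?_
        have h1 : 0 ≤ s ^ (β - 1) := Real.rpow_nonneg hs.1.le _
        rw [Real.norm_eq_abs, abs_mul, abs_of_nonneg h1]
        exact mul_le_mul_of_nonneg_right (hg_bd _) h1
      refine h1.trans ?_
      rw [← intervalIntegral.integral_of_le hδ.le, intervalIntegral.integral_const_mul,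
        integral_rpow (Or.inl (by linarith : (-1 : ℝ) < β - 1))]
      rw [sub_add_cancel, Real.zero_rpow hβ0.ne']
      rw [mul_div_assoc]
      gcongr
      · linarith
    -- bound 2
    have hb2 : |∫ s in Ioc δ (a + δ), (G s - F s)| ≤ B * δ ^ β / β := by
      have hint_t : IntegrableOn (fun s : ℝ => s ^ (β - 1)) (Ioc δ (a + δ)) :=
        (intervalIntegrable_iff_integrableOn_Ioc_of_le hda).1 (hII δ (a + δ))
      have hII2 : IntervalIntegrable (fun s : ℝ => (s - δ) ^ (β - 1)) volume δ (a + δ) := by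
        have := (hII 0 a).comp_sub_right δ
        simpa using this
      have hint_s : IntegrableOn (fun s : ℝ => (s - δ) ^ (β - 1)) (Ioc δ (a + δ)) :=
        (intervalIntegrable_iff_integrableOn_Ioc_of_le hda).1 hII2
      have hH_int : IntegrableOn (fun s : ℝ => B * ((s - δ) ^ (β - 1) - s ^ (β - 1)))
          (Ioc δ (a + δ)) := (hint_s.sub hint_t).const_mul B
      have h1 : |∫ s in Ioc δ (a + δ), (G s - F s)|
          ≤ ∫ s in Ioc δ (a + δ), B * ((s - δ) ^ (β - 1) - s ^ (β - 1)) := by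
        rw [← Real.norm_eq_abs]
        refine (norm_integral_le_integral_norm _).trans ?_
        refine setIntegral_mono_on ((hIntD.mono_set
          (by rw [← hsp2]; exact subset_union_left)).norm) hH_int measurableSet_Ioc
          fun s hs => ?_
        have hs1 : δ < s := hs.1
        have hmono : s ^ (β - 1) ≤ (s - δ) ^ (β - 1) :=
          Real.rpow_le_rpow_of_nonpos (by linarith) (by linarith) (by linarith)
        have hGF : G s - F s = g (t + s) * (s ^ (β - 1) - (s - δ) ^ (β - 1)) := by
          simp only [hGdef, hFdef]; ring
        rw [hGF, Real.norm_eq_abs, abs_mul, abs_of_nonpos (sub_nonpos.2 hmono), neg_sub]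
        exact mul_le_mul_of_nonneg_right (hg_bd _) (by linarith)
      refine h1.trans ?_
      have e1 : (∫ s in Ioc δ (a + δ), B * ((s - δ) ^ (β - 1) - s ^ (β - 1)))
          = B * ((a ^ β - 0 ^ β) / β - ((a + δ) ^ β - δ ^ β) / β) := by
        rw [← intervalIntegral.integral_of_le hda, intervalIntegral.integral_const_mul,
          intervalIntegral.integral_sub hII2 (hII δ (a + δ))]
        have e2 : (∫ x in δ..(a + δ), (x - δ) ^ (β - 1)) = ∫ x in (0 : ℝ)..a, x ^ (β - 1) := by
          rw [intervalIntegral.integral_comp_sub_right (fun x => x ^ (β - 1)) δ]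
          norm_num
        rw [e2, integral_rpow (Or.inl (by linarith : (-1 : ℝ) < β - 1)),
          integral_rpow (Or.inl (by linarith : (-1 : ℝ) < β - 1)), sub_add_cancel]
      rw [e1, Real.zero_rpow hβ0.ne']
      have hmono2 : a ^ β ≤ (a + δ) ^ β :=
        Real.rpow_le_rpow ha_pos.le (by linarith) hβ0.le
      rw [div_sub_div_same, mul_div_assoc]
      gcongr <;> linarith
    -- assemble
    have habs : |v t - v u| ≤ β * c * (B * δ ^ β / β + B * δ ^ β / β) := by
      rw [hdiff, abs_mul, abs_of_nonneg (by positivity : (0 : ℝ) ≤ β * c)]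
      refine mul_le_mul_of_nonneg_left ?_ (by positivity)
      refine (abs_add_le _ _).trans (add_le_add hb1 ?_)
      rw [hIoi]; exact hb2
    refine habs.trans_eq ?_
    field_simp
    ring
  -- conclude
  refine ⟨2 * c * B + 1, by positivity, fun t u ht hu => ?_⟩
  rcases lt_trichotomy t u with h | h | h
  · have hk := key t u ht h
    have h1 : |t - u| = u - t := by rw [abs_of_nonpos (by linarith)]; ring
    rw [h1]
    have h2 : (0 : ℝ) ≤ (u - t) ^ β := Real.rpow_nonneg (by linarith) _
    nlinarith
  · rw [h]
    simp [Real.zero_rpow hβ0.ne']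
  · have hk := key u t hu h
    have h1 : |t - u| = t - u := abs_of_nonneg (by linarith)
    rw [h1, abs_sub_comm]
    have h2 : (0 : ℝ) ≤ (t - u) ^ β := Real.rpow_nonneg (by linarith) _
    nlinarith
end

section
/- Let β > 0, c ≥ 0 and let h : [0,∞) → [0,∞) be nondecreasing with lim_{T→∞} h(T)/T^β = c. Then for every a > 0, lim_{T→∞} sup_{t∈[0,a]} | h(Tt)/T^β − c t^β | = 0. -/
set_option autoImplicit false
set_option maxHeartbeats 1000000

open MeasureTheory Filter Set

lemma ptwise (β c : ℝ) (hβ : 0 < β) (h : ℝ → ℝ)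
    (h_lim : Tendsto (fun T : ℝ => h T / T ^ β) atTop (nhds c)) {s : ℝ} (hs : 0 ≤ s) :
    Tendsto (fun T : ℝ => h (T * s) / T ^ β) atTop (nhds (c * s ^ β)) := by
  rcases hs.eq_or_lt with rfl | hs
  · rw [Real.zero_rpow hβ.ne', mul_zero]
    have hT : Tendsto (fun T : ℝ => T ^ β) atTop atTop := tendsto_rpow_atTop hβ
    simpa [mul_zero, div_eq_mul_inv] using tendsto_const_nhds.mul hT.inv_tendsto_atTop
  · have h1 : Tendsto (fun T : ℝ => T * s) atTop atTop :=
      Tendsto.atTop_mul_const hs tendsto_id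
    have h2 := (h_lim.comp h1).mul_const (s ^ β)
    refine h2.congr' ?_
    filter_upwards [eventually_gt_atTop (0 : ℝ)] with T hT
    have hsβ : (0:ℝ) < s ^ β := Real.rpow_pos_of_pos hs β
    simp only [Function.comp]
    rw [Real.mul_rpow hT.le hs.le, mul_comm (T ^ β)]
    field_simp

/-- if `h : [0,∞) → [0,∞)` is nondecreasing and
`h(T)/T^β → c`, then for every `a > 0`,
`sup_{t∈[0,a]} |h(Tt)/T^β - c t^β| → 0` as `T → ∞`. -/
theorem stmt14
    (β c : ℝ) (hβ : 0 < β) (hc : 0 ≤ c)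
    (h : ℝ → ℝ) (h_mono : MonotoneOn h (Ici 0))
    (h_nonneg : ∀ t ≥ (0 : ℝ), 0 ≤ h t)
    (h_lim : Tendsto (fun T : ℝ => h T / T ^ β) atTop (nhds c)) :
    ∀ a > (0 : ℝ),
      Tendsto (fun T : ℝ => ⨆ t : Icc (0 : ℝ) a,
        |h (T * ↑t) / T ^ β - c * (↑t : ℝ) ^ β|) atTop (nhds 0) := by
  intro a ha
  have hne : Nonempty (Icc (0:ℝ) a) := ⟨⟨0, by constructor <;> linarith⟩⟩
  set g : ℝ → ℝ := fun t => c * t ^ β with hg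
  have hgc : ContinuousOn g (Icc (0:ℝ) a) := by
    refine continuousOn_const.mul fun x _ => ?_
    exact (Real.continuousAt_rpow_const x β (Or.inr hβ.le)).continuousWithinAt
  have hUC : UniformContinuousOn g (Icc 0 a) :=
    isCompact_Icc.uniformContinuousOn_of_continuous hgc
  rw [Metric.tendsto_nhds]
  intro ε hε
  have hε3 : 0 < ε / 3 := by positivity
  obtain ⟨δ, hδ, hδε⟩ := Metric.uniformContinuousOn_iff_le.mp hUC (ε/3) hε3
  obtain ⟨n, hn⟩ := exists_nat_ge (a / δ)
  obtain ⟨N, hNdef⟩ : ∃ N : ℕ, N = n + 1 := ⟨_, rfl⟩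
  have hN : (0:ℝ) < N := by rw [hNdef]; positivity
  have haN : a / N ≤ δ := by
    rw [div_le_iff₀ hN]
    have h1 : a / δ ≤ (N:ℝ) := hn.trans (by rw [hNdef]; exact_mod_cast Nat.le_succ n)
    rw [div_le_iff₀ hδ] at h1
    linarith
  set sp : ℕ → ℝ := fun i => a * i / N with hsp
  have hsp_mem : ∀ j : ℕ, j ≤ N → sp j ∈ Icc (0:ℝ) a := by
    intro j hj
    constructor
    · positivity
    · rw [div_le_iff₀ hN]
      have : (j:ℝ) ≤ N := by exact_mod_cast hj
      nlinarith
  have hev : ∀ᶠ T : ℝ in atTop, ∀ i ∈ Finset.range (N+1),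
      |h (T * sp i) / T ^ β - g (sp i)| ≤ ε / 3 := by
    rw [Filter.eventually_all_finset]
    intro i hi
    have hi' : i ≤ N := by
      simpa [Nat.lt_succ_iff] using Finset.mem_range.mp hi
    have hpt := ptwise β c hβ h h_lim (hsp_mem i hi').1
    have := Metric.tendsto_nhds.mp hpt (ε/3) hε3
    filter_upwards [this] with T hT
    rw [Real.dist_eq] at hT
    exact hT.le
  filter_upwards [hev, eventually_gt_atTop (0:ℝ)] with T hTev hT
  have hTβ : (0:ℝ) < T ^ β := Real.rpow_pos_of_pos hT β
  -- key uniform bound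
  have key : ∀ t : Icc (0:ℝ) a, |h (T * ↑t) / T ^ β - c * (↑t:ℝ) ^ β| ≤ 2 * (ε/3) := by
    rintro ⟨t, ht0, hta⟩
    set i : ℕ := min ⌊t * N / a⌋₊ (N - 1) with hidef
    have hi1N : i + 1 ≤ N := by
      have : i ≤ N - 1 := min_le_right _ _
      omega
    have hiN : i ≤ N := le_trans (Nat.le_succ i) hi1N
    have hlow : sp i ≤ t := by
      have h1 : (i:ℝ) ≤ t * N / a :=
        le_trans (by exact_mod_cast min_le_left _ _) (Nat.floor_le (by positivity))
      rw [le_div_iff₀ ha] at h1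
      rw [hsp, div_le_iff₀ hN]
      nlinarith
    have hhigh : t ≤ sp (i + 1) := by
      rcases le_or_gt ⌊t * N / a⌋₊ (N - 1) with h' | h'
      · have hi : i = ⌊t * N / a⌋₊ := min_eq_left h'
        have h2 : t * N / a < ⌊t * N / a⌋₊ + 1 := Nat.lt_floor_add_one _
        rw [div_lt_iff₀ ha] at h2
        rw [hsp, le_div_iff₀ hN, hi]
        push_cast
        nlinarith
      · have hi : i = N - 1 := min_eq_right h'.le
        have hiN' : i + 1 = N := by omega
        rw [hsp, hiN', le_div_iff₀ hN]
        nlinarith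
    have hgap : sp (i+1) - sp i = a / N := by
      rw [hsp]; push_cast; field_simp; ring
    have hd1 : dist t (sp i) ≤ δ := by
      rw [Real.dist_eq, abs_of_nonneg (by linarith)]
      linarith
    have hd2 : dist t (sp (i+1)) ≤ δ := by
      rw [Real.dist_eq, abs_of_nonpos (by linarith)]
      linarith
    have hmem : (t : ℝ) ∈ Icc (0:ℝ) a := ⟨ht0, hta⟩
    have hg1 := hδε t hmem (sp i) (hsp_mem i hiN) hd1
    have hg2 := hδε t hmem (sp (i+1)) (hsp_mem (i+1) hi1N) hd2
    rw [Real.dist_eq] at hg1 hg2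
    have hA := hTev i (Finset.mem_range.mpr (by omega))
    have hB := hTev (i+1) (Finset.mem_range.mpr (by omega))
    -- monotonicity of h
    have hm1 : h (T * sp i) ≤ h (T * t) :=
      h_mono (mul_nonneg hT.le (hsp_mem i hiN).1) (mul_nonneg hT.le ht0)
        (mul_le_mul_of_nonneg_left hlow hT.le)
    have hm2 : h (T * t) ≤ h (T * sp (i+1)) :=
      h_mono (mul_nonneg hT.le ht0) (mul_nonneg hT.le (hsp_mem (i+1) hi1N).1)
        (mul_le_mul_of_nonneg_left hhigh hT.le)
    have hq1 : h (T * sp i) / T ^ β ≤ h (T * t) / T ^ β :=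
      div_le_div_of_nonneg_right hm1 hTβ.le
    have hq2 : h (T * t) / T ^ β ≤ h (T * sp (i+1)) / T ^ β :=
      div_le_div_of_nonneg_right hm2 hTβ.le
    simp only [hg] at hg1 hg2 hA hB
    rw [abs_le] at hA hB hg1 hg2 ⊢
    constructor
    · linarith [hA.1, hg1.2, hq1]
    · linarith [hB.2, hg2.1, hq2]
  have hsup_nonneg : 0 ≤ ⨆ t : Icc (0:ℝ) a, |h (T * ↑t) / T ^ β - c * (↑t:ℝ) ^ β| :=
    Real.iSup_nonneg fun t => abs_nonneg _
  rw [Real.dist_eq, sub_zero, abs_of_nonneg hsup_nonneg]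
  calc (⨆ t : Icc (0:ℝ) a, |h (T * ↑t) / T ^ β - c * (↑t:ℝ) ^ β|) ≤ 2 * (ε/3) :=
        ciSup_le key
    _ < ε := by linarith
end

section
/- Let m_φ > 0, σ > 0 and let f = ∑_{k=1}^m θ_k 1_{[0,t_k]} with θ_k ≥ 0, t_k > 0, a = max_k t_k. Then there exists exactly one bounded nonnegative Borel function v : [0,∞) → [0,∞) with compact support satisfying v(t) = (1/m_φ) ∫_0^∞ ( f(t+s) − (σ²/2) v(t+s)² ) ds for all t ≥ 0; moreover this solution vanishes outside [0,a]. -/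
/-!
Beyond `a` the forcing vanishes, so the right-hand side is `≤ 0` and every nonnegative solution
vanishes there. On `[0, a]` the equation becomes the Volterra equation
`v t = κ ∫_t^a (f - c v²)`, whose integrand is Lipschitz in `v` on bounded sets. The `n`-th
Picard iterates of such an equation differ by at most `(K (a - t))ⁿ / n!` times the initial
distance: this gives uniqueness (a Gronwall argument) and, for the equation with `v` truncated
to `[0, κ a B]`, existence by Banach's theorem applied to an iterate. The truncation is inactive
at the fixed point: it is at most `κ a B` because `f ≤ B`, and it is nonnegative because the
integrand reduces to `f ≥ 0` wherever the fixed point would be negative.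
-/

set_option autoImplicit false

open MeasureTheory Filter Set Function BoundedContinuousFunction Topology
open scoped Nat

lemma intervalIntegrable_of_abs_le {g : ℝ → ℝ} {C : ℝ} (hg : Measurable g)
    (hC : ∀ u, |g u| ≤ C) (x y : ℝ) : IntervalIntegrable g volume x y :=
  (intervalIntegrable_const (c := C)).mono_fun hg.aestronglyMeasurable <|
    ae_of_all _ fun u => by
      simpa [Real.norm_eq_abs, abs_of_nonneg ((abs_nonneg _).trans (hC u))] using hC u

lemma le_mul_pow_div_factorial_of_le_integral {b a L D : ℝ} {ρ : ℕ → ℝ → ℝ}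
    (hL : 0 ≤ L) (hint : ∀ n, IntervalIntegrable (ρ n) volume b a)
    (h0 : ∀ t ∈ Icc b a, ρ 0 t ≤ D)
    (hsucc : ∀ n, ∀ t ∈ Icc b a, ρ (n + 1) t ≤ L * ∫ u in t..a, ρ n u) :
    ∀ n, ∀ t ∈ Icc b a, ρ n t ≤ (L * (a - t)) ^ n / n ! * D := by
  intro n
  induction n with
  | zero => simpa using h0
  | succ n ih =>
    intro t ht
    have hmono : ∫ u in t..a, ρ n u ≤ ∫ u in t..a, (L * (a - u)) ^ n / n ! * D :=
      intervalIntegral.integral_mono_on ht.2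
        ((hint n).mono_set (uIcc_subset_uIcc_right (Icc_subset_uIcc ht)))
        (Continuous.intervalIntegrable (by fun_prop) _ _)
        fun u hu => ih u ⟨ht.1.trans hu.1, hu.2⟩
    have hpow : ∫ u in t..a, (a - u) ^ n = (a - t) ^ (n + 1) / (n + 1) := by
      rw [intervalIntegral.integral_comp_sub_left (fun x => x ^ n), integral_pow]
      simp
    have hpoly : ∫ u in t..a, (L * (a - u)) ^ n / n ! * D =
        L ^ n / n ! * D * ((a - t) ^ (n + 1) / (n + 1)) := by
      rw [← hpow, ← intervalIntegral.integral_const_mul]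
      congr 1 with u
      rw [mul_pow]
      ring
    calc ρ (n + 1) t ≤ L * ∫ u in t..a, ρ n u := hsucc n t ht
      _ ≤ L * (L ^ n / n ! * D * ((a - t) ^ (n + 1) / (n + 1))) := by
        rw [← hpoly]; exact mul_le_mul_of_nonneg_left hmono hL
      _ = (L * (a - t)) ^ (n + 1) / (n + 1) ! * D := by
        push_cast [Nat.factorial_succ, mul_pow]
        field_simp
        ring

lemma nonpos_of_le_integral {b a L D : ℝ} {ρ : ℝ → ℝ} (hL : 0 ≤ L)
    (hint : IntervalIntegrable ρ volume b a) (hD : ∀ t ∈ Icc b a, ρ t ≤ D)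
    (hρ : ∀ t ∈ Icc b a, ρ t ≤ L * ∫ u in t..a, ρ u) :
    ∀ t ∈ Icc b a, ρ t ≤ 0 := by
  intro t ht
  have hlim : Tendsto (fun n => (L * (a - t)) ^ n / n ! * D) atTop (𝓝 0) := by
    simpa using (FloorSemiring.tendsto_pow_div_factorial_atTop (L * (a - t))).mul_const D
  exact ge_of_tendsto' hlim fun n =>
    le_mul_pow_div_factorial_of_le_integral (ρ := fun _ => ρ) hL (fun _ => hint) hD
      (fun _ => hρ) n t ht

theorem BoundedContinuousFunction.exists_isFixedPt_of_volterra {b a K : ℝ} (hba : b ≤ a)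
    (hK : 0 ≤ K) {T : (ℝ →ᵇ ℝ) → (ℝ →ᵇ ℝ)}
    (hT_proj : ∀ v t, T v t = T v (projIcc b a hba t))
    (hT : ∀ v w, ∀ t ∈ Icc b a, |T v t - T w t| ≤ K * ∫ u in t..a, |v u - w u|) :
    ∃ v, IsFixedPt T v := by
  have hq : ∀ n, 0 ≤ (K * (a - b)) ^ n / n ! := fun n =>
    div_nonneg (pow_nonneg (mul_nonneg hK (sub_nonneg.2 hba)) _) (Nat.cast_nonneg _)
  have hiter : ∀ n v w, dist (T^[n + 1] v) (T^[n + 1] w) ≤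
      (K * (a - b)) ^ (n + 1) / (n + 1) ! * dist v w := by
    intro n v w
    refine (dist_le (mul_nonneg (hq _) dist_nonneg)).2 fun t => ?_
    have hs : (projIcc b a hba t : ℝ) ∈ Icc b a := Subtype.prop _
    have hbound := le_mul_pow_div_factorial_of_le_integral
      (ρ := fun n u => |T^[n] v u - T^[n] w u|) hK
      (fun n => ((T^[n] v).continuous.sub (T^[n] w).continuous).abs.intervalIntegrable _ _)
      (fun u _ => by simpa [Real.dist_eq] using dist_coe_le_dist (f := v) (g := w) u)
      (fun n u hu => by simpa only [iterate_succ_apply'] using hT _ _ u hu) (n + 1) _ hs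
    rw [Real.dist_eq, iterate_succ_apply', iterate_succ_apply', hT_proj, hT_proj (T^[n] w),
      ← iterate_succ_apply' T, ← iterate_succ_apply' T]
    refine hbound.trans ?_
    have : 0 ≤ K * (a - projIcc b a hba t) := mul_nonneg hK (sub_nonneg.2 hs.2)
    gcongr
    exact hs.1
  obtain ⟨n, hn⟩ : ∃ n, (K * (a - b)) ^ (n + 1) / (n + 1) ! < 1 :=
    (((FloorSemiring.tendsto_pow_div_factorial_atTop (K * (a - b))).comp
      (tendsto_add_atTop_nat 1)).eventually (gt_mem_nhds one_pos)).exists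
  have hcontr : ContractingWith ⟨_, hq (n + 1)⟩ (T^[n + 1]) :=
    ⟨hn, LipschitzWith.of_dist_le_mul (hiter n)⟩
  exact ⟨_, hcontr.isFixedPt_fixedPoint_iterate⟩

lemma nonneg_of_eq_intervalIntegral {x h : ℝ → ℝ} {b a : ℝ} (hx : ContinuousOn x (Icc b a))
    (hh : IntervalIntegrable h volume b a) (hx_eq : ∀ t ∈ Icc b a, x t = ∫ u in t..a, h u)
    (hh_nonneg : ∀ u ∈ Icc b a, x u < 0 → 0 ≤ h u) : ∀ t ∈ Icc b a, 0 ≤ x t := by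
  intro t₀ ht₀
  by_contra! hneg
  set S := Icc t₀ a ∩ x ⁻¹' Ici 0
  have hS : IsClosed S := (hx.mono (Icc_subset_Icc_left ht₀.1)).preimage_isClosed_of_isClosed
    isClosed_Icc isClosed_Ici
  have haS : a ∈ S := ⟨⟨ht₀.2, le_rfl⟩, by
    simp [hx_eq a ⟨ht₀.1.trans ht₀.2, le_rfl⟩]⟩
  have hbdd : BddBelow S := ⟨t₀, fun t ht => ht.1.1⟩
  set t₁ := sInf S
  have ht₁ : t₁ ∈ S := hS.csInf_mem ⟨a, haS⟩ hbdd
  have ht₁' : t₁ ∈ Icc b a := ⟨ht₀.1.trans ht₁.1.1, ht₁.1.2⟩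
  have ht₀₁ : t₀ < t₁ := lt_of_le_of_ne ht₁.1.1 fun h => hneg.not_ge (h ▸ ht₁.2)
  have hpos : 0 ≤ ∫ u in t₀..t₁, h u := by
    rw [intervalIntegral.integral_of_le ht₀₁.le, integral_Ioc_eq_integral_Ioo]
    refine setIntegral_nonneg measurableSet_Ioo fun u hu => hh_nonneg u
      ⟨ht₀.1.trans hu.1.le, hu.2.le.trans ht₁.1.2⟩ (not_le.1 fun hxu => ?_)
    exact (csInf_le hbdd ⟨⟨hu.1.le, hu.2.le.trans ht₁.1.2⟩, hxu⟩).not_gt hu.2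
  have hsplit : x t₀ = (∫ u in t₀..t₁, h u) + x t₁ := by
    rw [hx_eq t₀ ht₀, hx_eq t₁ ht₁', intervalIntegral.integral_add_adjacent_intervals
      (hh.mono_set (uIcc_subset_uIcc (Icc_subset_uIcc ht₀) (Icc_subset_uIcc ht₁')))
      (hh.mono_set (uIcc_subset_uIcc_right (Icc_subset_uIcc ht₁')))]
  have ht₁_nonneg : 0 ≤ x t₁ := ht₁.2
  linarith

lemma abs_sq_sub_sq_le {x y M : ℝ} (hx : x ∈ Icc 0 M) (hy : y ∈ Icc 0 M) :
    |x ^ 2 - y ^ 2| ≤ 2 * M * |x - y| := by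
  rw [sq_sub_sq, abs_mul, abs_of_nonneg (by linarith [hx.1, hy.1])]
  gcongr
  linarith [hx.2, hy.2]

lemma setIntegral_Ioi_add_eq_intervalIntegral {g : ℝ → ℝ} {t a : ℝ} (hta : t ≤ a)
    (hg : ∀ u, a < u → g u = 0) : ∫ s in Ioi (0 : ℝ), g (t + s) = ∫ u in t..a, g u := by
  rw [setIntegral_eq_of_subset_of_forall_sdiff_eq_zero (f := fun s => g (t + s))
      measurableSet_Ioi (Ioc_subset_Ioi_self : Ioc (0 : ℝ) (a - t) ⊆ Ioi 0)
      fun s hs => hg _ (by linarith [hs.1.out, not_and.1 hs.2 hs.1]),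
    ← intervalIntegral.integral_of_le (sub_nonneg.2 hta),
    intervalIntegral.integral_comp_add_left g]
  simp

noncomputable def BoundedContinuousFunction.tailIntegral {b a : ℝ} (hba : b ≤ a)
    (g : ℝ → ℝ) (hg : ∀ x y, IntervalIntegrable g volume x y) : ℝ →ᵇ ℝ :=
  (mkOfCompact ⟨fun s : Icc b a => ∫ u in (s : ℝ)..a, g u, by
    refine (?_ : Continuous fun x : ℝ => ∫ u in x..a, g u).comp continuous_subtype_val
    exact (intervalIntegral.continuous_primitive hg a).neg.congr fun x =>
      (intervalIntegral.integral_symm _ _).symm⟩).compContinuous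
    ⟨projIcc b a hba, continuous_projIcc⟩

structure IsForcing (f : ℝ → ℝ) (a B : ℝ) : Prop where
  measurable : Measurable f
  nonneg : ∀ u, 0 ≤ f u
  le_bound : ∀ u, f u ≤ B
  eq_zero_of_lt : ∀ u, a < u → f u = 0

def IsVolterraSolution (κ c : ℝ) (f v : ℝ → ℝ) : Prop :=
  Measurable v ∧ (∀ t, 0 ≤ v t) ∧ (∃ M, ∀ t, v t ≤ M) ∧
    (∃ b : ℝ, ∀ t, b < t → v t = 0) ∧ (∀ t < (0 : ℝ), v t = 0) ∧
    (∀ t ≥ (0 : ℝ), v t = κ * ∫ s in Ioi (0 : ℝ), (f (t + s) - c * v (t + s) ^ 2))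

section VolterraSolution

variable {κ c a B : ℝ} {f : ℝ → ℝ}

lemma IsForcing.mono {a' : ℝ} (hf : IsForcing f a B) (h : a ≤ a') : IsForcing f a' B :=
  ⟨hf.measurable, hf.nonneg, hf.le_bound, fun u hu => hf.eq_zero_of_lt u (h.trans_lt hu)⟩

lemma IsForcing.intervalIntegrable_sub_mul_sq (hf : IsForcing f a B) {M : ℝ} {v : ℝ → ℝ}
    (hv : Measurable v) (hvM : ∀ u, v u ∈ Icc 0 M) (x y : ℝ) :
    IntervalIntegrable (fun u => f u - c * v u ^ 2) volume x y := by
  refine intervalIntegrable_of_abs_le (C := B + |c| * M ^ 2)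
    (hf.measurable.sub ((hv.pow_const 2).const_mul c)) (fun u => ?_) x y
  have hv2 : v u ^ 2 ≤ M ^ 2 := pow_le_pow_left₀ (hvM u).1 (hvM u).2 2
  calc |f u - c * v u ^ 2| ≤ |f u| + |c * v u ^ 2| := abs_sub _ _
    _ = f u + |c| * v u ^ 2 := by
        rw [abs_mul, abs_of_nonneg (hf.nonneg u), abs_of_nonneg (sq_nonneg (v u))]
    _ ≤ B + |c| * M ^ 2 :=
        add_le_add (hf.le_bound u) (mul_le_mul_of_nonneg_left hv2 (abs_nonneg c))

lemma IsForcing.abs_sub_le_integral (hf : IsForcing f a B) (hκ : 0 ≤ κ) (hc : 0 ≤ c)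
    {M : ℝ} {v w : ℝ → ℝ} (hv : Measurable v) (hw : Measurable w)
    (hvM : ∀ u, v u ∈ Icc 0 M) (hwM : ∀ u, w u ∈ Icc 0 M) {t s : ℝ} (hts : t ≤ s) :
    |(κ * ∫ u in t..s, (f u - c * v u ^ 2)) - κ * ∫ u in t..s, (f u - c * w u ^ 2)| ≤
      2 * κ * c * M * ∫ u in t..s, |v u - w u| := by
  have hvw : IntervalIntegrable (fun u => |v u - w u|) volume t s :=
    intervalIntegrable_of_abs_le (by fun_prop) (fun u => (abs_abs _).trans_le
      (abs_sub_le_of_nonneg_of_le (hvM u).1 (hvM u).2 (hwM u).1 (hwM u).2)) t s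
  have hpt : ∀ u, ‖(f u - c * v u ^ 2) - (f u - c * w u ^ 2)‖ ≤ 2 * c * M * |v u - w u| :=
    fun u => calc
      _ = c * |w u ^ 2 - v u ^ 2| := by
        rw [Real.norm_eq_abs, sub_sub_sub_cancel_left, ← mul_sub, abs_mul, abs_of_nonneg hc]
      _ ≤ c * (2 * M * |w u - v u|) :=
        mul_le_mul_of_nonneg_left (abs_sq_sub_sq_le (hwM u) (hvM u)) hc
      _ = 2 * c * M * |v u - w u| := by rw [abs_sub_comm]; ring
  rw [← mul_sub, ← intervalIntegral.integral_sub (hf.intervalIntegrable_sub_mul_sq hv hvM _ _)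
    (hf.intervalIntegrable_sub_mul_sq hw hwM _ _), abs_mul, abs_of_nonneg hκ, ← Real.norm_eq_abs]
  calc κ * ‖∫ u in t..s, ((f u - c * v u ^ 2) - (f u - c * w u ^ 2))‖
      ≤ κ * ∫ u in t..s, 2 * c * M * |v u - w u| :=
        mul_le_mul_of_nonneg_left (intervalIntegral.norm_integral_le_of_norm_le hts
          (ae_of_all _ fun u _ => hpt u) (hvw.const_mul _)) hκ
    _ = 2 * κ * c * M * ∫ u in t..s, |v u - w u| := by
        rw [intervalIntegral.integral_const_mul]; ring

lemma IsVolterraSolution.eq_zero_of_lt (hκ : 0 ≤ κ) (hc : 0 ≤ c) {v : ℝ → ℝ}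
    (hv : IsVolterraSolution κ c f v) (hfa : ∀ u, a < u → f u = 0) {t : ℝ} (hat : a < t) :
    v t = 0 := by
  obtain ⟨-, hv0, -, -, hv_neg, hv_eq⟩ := hv
  refine le_antisymm ?_ (hv0 t)
  rcases lt_or_ge t 0 with ht | ht
  · exact (hv_neg t ht).le
  rw [hv_eq t ht]
  refine mul_nonpos_of_nonneg_of_nonpos hκ (setIntegral_nonpos measurableSet_Ioi fun s hs => ?_)
  rw [hfa _ (by linarith [hs.out]), zero_sub, neg_nonpos]
  positivity

lemma IsVolterraSolution.eq_intervalIntegral (hκ : 0 ≤ κ) (hc : 0 ≤ c) {v : ℝ → ℝ}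
    (hv : IsVolterraSolution κ c f v) (hfa : ∀ u, a < u → f u = 0) {t : ℝ}
    (ht : t ∈ Icc 0 a) : v t = κ * ∫ u in t..a, (f u - c * v u ^ 2) := by
  rw [hv.2.2.2.2.2 t ht.1, setIntegral_Ioi_add_eq_intervalIntegral
    (g := fun u => f u - c * v u ^ 2) ht.2 fun u hu => by
      rw [hfa u hu, hv.eq_zero_of_lt hκ hc hfa hu]; ring]

lemma isVolterraSolution_of_eqOn_Icc (hfa : ∀ u, a < u → f u = 0) {v : ℝ → ℝ} {M : ℝ}
    (hv : Measurable v) (hvM : ∀ t, v t ∈ Icc 0 M) (hv_out : ∀ t ∉ Icc 0 a, v t = 0)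
    (hv_eq : ∀ t ∈ Icc 0 a, v t = κ * ∫ u in t..a, (f u - c * v u ^ 2)) :
    IsVolterraSolution κ c f v := by
  have hg : ∀ u, a < u → f u - c * v u ^ 2 = 0 := fun u hu => by
    rw [hfa u hu, hv_out u fun h => hu.not_ge h.2]; ring
  refine ⟨hv, fun t => (hvM t).1, ⟨M, fun t => (hvM t).2⟩,
    ⟨a, fun t ht => hv_out t fun h => ht.not_ge h.2⟩,
    fun t ht => hv_out t fun h => ht.not_ge h.1, fun t ht => ?_⟩
  rcases le_or_gt t a with hta | hat
  · rw [setIntegral_Ioi_add_eq_intervalIntegral (g := fun u => f u - c * v u ^ 2) hta hg,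
      hv_eq t ⟨ht, hta⟩]
  · rw [setIntegral_Ioi_add_eq_intervalIntegral (g := fun u => f u - c * v u ^ 2) le_rfl
      fun u hu => hg u (hat.trans hu), intervalIntegral.integral_same, mul_zero,
      hv_out t fun h => hat.not_ge h.2]

lemma IsVolterraSolution.unique (hκ : 0 ≤ κ) (hc : 0 ≤ c) (hf : IsForcing f a B)
    {v w : ℝ → ℝ} (hv : IsVolterraSolution κ c f v) (hw : IsVolterraSolution κ c f w) :
    v = w := by
  obtain ⟨hvm, hv0, ⟨Mv, hvM⟩, -, hv_neg, -⟩ := id hv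
  obtain ⟨hwm, hw0, ⟨Mw, hwM⟩, -, hw_neg, -⟩ := id hw
  set M := max Mv Mw
  have hvI : ∀ u, v u ∈ Icc 0 M := fun u => ⟨hv0 u, (hvM u).trans (le_max_left _ _)⟩
  have hwI : ∀ u, w u ∈ Icc 0 M := fun u => ⟨hw0 u, (hwM u).trans (le_max_right _ _)⟩
  have hM : 0 ≤ M := (hvI 0).1.trans (hvI 0).2
  have hvw : ∀ u, |v u - w u| ≤ M := fun u =>
    abs_sub_le_of_nonneg_of_le (hvI u).1 (hvI u).2 (hwI u).1 (hwI u).2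
  have hclose : ∀ t ∈ Icc 0 a, |v t - w t| ≤ 0 :=
    nonpos_of_le_integral (mul_nonneg (mul_nonneg (mul_nonneg zero_le_two hκ) hc) hM)
      (intervalIntegrable_of_abs_le (by fun_prop) (fun u => (abs_abs _).trans_le (hvw u)) 0 a)
      (fun t _ => hvw t) fun t ht => by
        rw [hv.eq_intervalIntegral hκ hc hf.eq_zero_of_lt ht,
          hw.eq_intervalIntegral hκ hc hf.eq_zero_of_lt ht]
        exact hf.abs_sub_le_integral hκ hc hvm hwm hvI hwI ht.2
  funext t
  rcases lt_or_ge t 0 with ht0 | ht0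
  · rw [hv_neg t ht0, hw_neg t ht0]
  rcases le_or_gt t a with hta | hat
  · exact sub_eq_zero.1 (abs_nonpos_iff.1 (hclose t ⟨ht0, hta⟩))
  · rw [hv.eq_zero_of_lt hκ hc hf.eq_zero_of_lt hat, hw.eq_zero_of_lt hκ hc hf.eq_zero_of_lt hat]

lemma IsForcing.exists_eq_intervalIntegral_projIcc (hf : IsForcing f a B) (ha : 0 ≤ a)
    (hκ : 0 ≤ κ) (hc : 0 ≤ c) {M : ℝ} (hM : 0 ≤ M) :
    ∃ x : ℝ →ᵇ ℝ, ∀ t, x t =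
      κ * ∫ u in (projIcc 0 a ha t : ℝ)..a, (f u - c * (projIcc 0 M hM (x u) : ℝ) ^ 2) := by
  have hp : ∀ x : ℝ →ᵇ ℝ, Continuous fun u => (projIcc 0 M hM (x u) : ℝ) := fun x =>
    continuous_subtype_val.comp (continuous_projIcc.comp x.continuous)
  let T : (ℝ →ᵇ ℝ) → (ℝ →ᵇ ℝ) := fun x => κ • tailIntegral ha _
    (hf.intervalIntegrable_sub_mul_sq (c := c) (hp x).measurable fun u => (projIcc 0 M hM _).2)
  have hT : ∀ x t, T x t =
      κ * ∫ u in (projIcc 0 a ha t : ℝ)..a, (f u - c * (projIcc 0 M hM (x u) : ℝ) ^ 2) :=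
    fun _ _ => rfl
  have hK : 0 ≤ 2 * κ * c * M := mul_nonneg (mul_nonneg (mul_nonneg zero_le_two hκ) hc) hM
  have hT_lip : ∀ x y, ∀ t ∈ Icc 0 a,
      |T x t - T y t| ≤ 2 * κ * c * M * ∫ u in t..a, |x u - y u| := by
    intro x y t ht
    rw [hT, hT, projIcc_of_mem _ ht]
    refine (hf.abs_sub_le_integral hκ hc (hp x).measurable (hp y).measurable
      (fun u => (projIcc 0 M hM _).2) (fun u => (projIcc 0 M hM _).2) ht.2).trans ?_
    exact mul_le_mul_of_nonneg_left (intervalIntegral.integral_mono_on ht.2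
      (((hp x).sub (hp y)).abs.intervalIntegrable _ _)
      ((x.continuous.sub y.continuous).abs.intervalIntegrable _ _)
      fun u _ => abs_projIcc_sub_projIcc hM) hK
  obtain ⟨x, hx⟩ :=
    exists_isFixedPt_of_volterra ha hK (fun x t => by rw [hT, hT, projIcc_val]) hT_lip
  exact ⟨x, fun t => (DFunLike.congr_fun hx t).symm.trans (hT x t)⟩

lemma IsForcing.mem_Icc_of_eq_intervalIntegral_projIcc (hf : IsForcing f a B) (ha : 0 ≤ a)
    (hκ : 0 ≤ κ) (hc : 0 ≤ c) (hM : 0 ≤ κ * a * B) {x : ℝ →ᵇ ℝ} (hx : ∀ t, x t =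
      κ * ∫ u in (projIcc 0 a ha t : ℝ)..a, (f u - c * (projIcc 0 _ hM (x u) : ℝ) ^ 2))
    {t : ℝ} (ht : t ∈ Icc 0 a) : x t ∈ Icc 0 (κ * a * B) := by
  have hg : ∀ y z, IntervalIntegrable (fun u => f u - c * (projIcc 0 _ hM (x u) : ℝ) ^ 2)
      volume y z :=
    hf.intervalIntegrable_sub_mul_sq
      (continuous_subtype_val.comp (continuous_projIcc.comp x.continuous)).measurable
      fun u => (projIcc 0 _ hM _).2
  refine ⟨nonneg_of_eq_intervalIntegral
    (h := fun u => κ * (f u - c * (projIcc 0 _ hM (x u) : ℝ) ^ 2)) x.continuous.continuousOn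
    ((hg 0 a).const_mul κ)
    (fun t ht => by rw [hx t, projIcc_of_mem _ ht, intervalIntegral.integral_const_mul])
    (fun u _ hu => mul_nonneg hκ (by simp [projIcc_of_le_left _ hu.le, hf.nonneg u])) t ht, ?_⟩
  rw [hx t, projIcc_of_mem _ ht]
  calc κ * ∫ u in t..a, (f u - c * (projIcc 0 _ hM (x u) : ℝ) ^ 2)
      ≤ κ * ∫ _ in t..a, B :=
        mul_le_mul_of_nonneg_left (intervalIntegral.integral_mono_on ht.2 (hg _ _)
          intervalIntegrable_const fun u _ =>
            (sub_le_self _ (mul_nonneg hc (sq_nonneg _))).trans (hf.le_bound u)) hκ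
    _ ≤ κ * a * B := by
      rw [intervalIntegral.integral_const, smul_eq_mul, mul_assoc]
      exact mul_le_mul_of_nonneg_left (mul_le_mul_of_nonneg_right (by linarith [ht.1])
        ((hf.nonneg 0).trans (hf.le_bound 0))) hκ

lemma IsForcing.exists_isVolterraSolution (hf : IsForcing f a B) (ha : 0 ≤ a) (hκ : 0 ≤ κ)
    (hc : 0 ≤ c) : ∃ v, IsVolterraSolution κ c f v := by
  have hM : 0 ≤ κ * a * B := mul_nonneg (mul_nonneg hκ ha) ((hf.nonneg 0).trans (hf.le_bound 0))
  obtain ⟨x, hx⟩ := hf.exists_eq_intervalIntegral_projIcc ha hκ hc hM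
  have hxI : ∀ {t}, t ∈ Icc 0 a → x t ∈ Icc 0 (κ * a * B) :=
    hf.mem_Icc_of_eq_intervalIntegral_projIcc ha hκ hc hM hx
  refine ⟨(Icc 0 a).indicator x, isVolterraSolution_of_eqOn_Icc hf.eq_zero_of_lt
    (x.continuous.measurable.indicator measurableSet_Icc) (M := κ * a * B) (fun t => ?_)
    (fun t ht => indicator_of_notMem ht _) fun t ht => ?_⟩
  · by_cases ht : t ∈ Icc 0 a
    · simpa [indicator_of_mem ht] using hxI ht
    · simpa [indicator_of_notMem ht] using hM
  · rw [indicator_of_mem ht, hx t, projIcc_of_mem _ ht]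
    congr 1
    refine intervalIntegral.integral_congr fun u hu => ?_
    rw [uIcc_of_le ht.2] at hu
    have hu' : u ∈ Icc 0 a := ⟨ht.1.trans hu.1, hu.2⟩
    rw [indicator_of_mem hu', projIcc_of_mem _ (hxI hu')]

theorem IsForcing.existsUnique_isVolterraSolution (hf : IsForcing f a B) (hκ : 0 ≤ κ)
    (hc : 0 ≤ c) : ∃! v, IsVolterraSolution κ c f v := by
  obtain ⟨v, hv⟩ :=
    (hf.mono (le_max_left a 0)).exists_isVolterraSolution (le_max_right a 0) hκ hc
  exact ⟨v, hv, fun w hw => hw.unique hκ hc hf hv⟩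

end VolterraSolution

lemma isForcing_sum_indicator {m : ℕ} {θ tk : ℕ → ℝ} {a : ℝ}
    (hθ : ∀ k < m, 0 ≤ θ k) (htk : ∀ k < m, tk k ≤ a) {f : ℝ → ℝ}
    (hf : ∀ t, f t = ∑ k ∈ Finset.range m, (Icc 0 (tk k)).indicator (fun _ => θ k) t) :
    IsForcing f a (∑ k ∈ Finset.range m, θ k) := by
  rw [show f = _ from funext hf]
  refine ⟨Finset.measurable_sum _ fun k _ => measurable_const.indicator measurableSet_Icc,
    fun u => Finset.sum_nonneg fun k hk => indicator_nonneg
      (fun _ _ => hθ k (Finset.mem_range.1 hk)) u,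
    fun u => Finset.sum_le_sum fun k hk => indicator_le_self'
      (fun _ _ => hθ k (Finset.mem_range.1 hk)) u,
    fun u hu => Finset.sum_eq_zero fun k hk => indicator_of_notMem (fun h => ?_) _⟩
  exact (h.2.trans (htk k (Finset.mem_range.1 hk))).not_gt hu

theorem stmt17_general
    (mφ σ : ℝ) (hmφ : 0 < mφ)
    (m : ℕ) (θ tk : ℕ → ℝ)
    (hθ : ∀ k < m, 0 ≤ θ k)
    (a : ℝ) (ha_max : ∀ k < m, tk k ≤ a)
    (f : ℝ → ℝ)
    (hf : ∀ t, f t = ∑ k ∈ Finset.range m,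
      Set.indicator (Icc (0 : ℝ) (tk k)) (fun _ => θ k) t) :
    (∃! v : ℝ → ℝ,
      Measurable v ∧ (∀ t, 0 ≤ v t) ∧ (∃ M, ∀ t, v t ≤ M) ∧
      (∃ b : ℝ, ∀ t, b < t → v t = 0) ∧ (∀ t < (0 : ℝ), v t = 0) ∧
      (∀ t ≥ (0 : ℝ), v t = (1 / mφ) * ∫ s in Set.Ioi (0 : ℝ),
        (f (t + s) - σ ^ 2 / 2 * v (t + s) ^ 2))) ∧
    (∀ v : ℝ → ℝ,
      (Measurable v ∧ (∀ t, 0 ≤ v t) ∧ (∃ M, ∀ t, v t ≤ M) ∧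
      (∃ b : ℝ, ∀ t, b < t → v t = 0) ∧ (∀ t < (0 : ℝ), v t = 0) ∧
      (∀ t ≥ (0 : ℝ), v t = (1 / mφ) * ∫ s in Set.Ioi (0 : ℝ),
        (f (t + s) - σ ^ 2 / 2 * v (t + s) ^ 2))) →
      ∀ t, a < t → v t = 0) := by
  have hforcing := isForcing_sum_indicator hθ ha_max hf
  have hκ : 0 ≤ 1 / mφ := by positivity
  have hc : 0 ≤ σ ^ 2 / 2 := by positivity
  exact ⟨hforcing.existsUnique_isVolterraSolution hκ hc,
    fun v hv t ht => IsVolterraSolution.eq_zero_of_lt hκ hc hv hforcing.eq_zero_of_lt ht⟩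

/-- for `m_φ > 0`, `σ > 0` and a nonnegative step function
`f = ∑_{k=1}^m θ_k 1_{[0,t_k]}`, the equation
`v(t) = (1/m_φ) ∫_0^∞ (f(t+s) - (σ²/2) v(t+s)²) ds` (for `t ≥ 0`) has exactly
one bounded nonnegative Borel solution with compact support (solutions on
`[0,∞)` identified with their extension by `0`); moreover this solution
vanishes outside `[0,a]`, `a = max_k t_k`. -/
theorem stmt17
    (mφ σ : ℝ) (hmφ : 0 < mφ) (hσ : 0 < σ)
    (m : ℕ) (hm : 0 < m) (θ tk : ℕ → ℝ)
    (hθ : ∀ k < m, 0 ≤ θ k) (htk : ∀ k < m, 0 < tk k)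
    (a : ℝ) (ha_mem : ∃ k < m, tk k = a) (ha_max : ∀ k < m, tk k ≤ a)
    (f : ℝ → ℝ)
    (hf : ∀ t, f t = ∑ k ∈ Finset.range m,
      Set.indicator (Icc (0 : ℝ) (tk k)) (fun _ => θ k) t) :
    (∃! v : ℝ → ℝ,
      Measurable v ∧ (∀ t, 0 ≤ v t) ∧ (∃ M, ∀ t, v t ≤ M) ∧
      (∃ b : ℝ, ∀ t, b < t → v t = 0) ∧ (∀ t < (0 : ℝ), v t = 0) ∧
      (∀ t ≥ (0 : ℝ), v t = (1 / mφ) * ∫ s in Set.Ioi (0 : ℝ),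
        (f (t + s) - σ ^ 2 / 2 * v (t + s) ^ 2))) ∧
    (∀ v : ℝ → ℝ,
      (Measurable v ∧ (∀ t, 0 ≤ v t) ∧ (∃ M, ∀ t, v t ≤ M) ∧
      (∃ b : ℝ, ∀ t, b < t → v t = 0) ∧ (∀ t < (0 : ℝ), v t = 0) ∧
      (∀ t ≥ (0 : ℝ), v t = (1 / mφ) * ∫ s in Set.Ioi (0 : ℝ),
        (f (t + s) - σ ^ 2 / 2 * v (t + s) ^ 2))) →
      ∀ t, a < t → v t = 0) :=
  stmt17_general mφ σ hmφ m θ tk hθ a ha_max f hf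
end
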